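/- arXiv:0910.0905 — 2 statements merged into one kernel-verified Lean document; each statement's English description precedes it below -/
import Mathlib

section
/- Let n ≥ 1 and r ≥ 2 be integers. The number N_{n,r}^D of minimally intersecting r-tuples of B_n-partitions without zero-block satisfies N_{n,r}^D = Σ_{j=1}^n N_j^r · 2^{n−j} · s(n, j), where N_j is the number of B_j-partitions without zero-block and s(n, j) denotes the (signed) Stirling number of the first kind, defined by x(x−1)⋯(x−n+1) = Σ_{j=0}^n s(n, j) x^j. -/
open scoped BigOperators

/-- The ground set `[±n] = {±1, …, ±n}`. -/
noncomputable def pmSet (n : ℕ) : Finset ℤ := (Finset.Icc (-(n : ℤ)) n).erase 0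

/-- The block `-B` obtained by negating all elements of `B`. -/
def negBlock (B : Finset ℤ) : Finset ℤ := B.image (fun x => -x)

/-- `π` is a set partition of `[±n]` of type `Bₙ`. -/
def IsBnPartition (n : ℕ) (π : Finset (Finset ℤ)) : Prop :=
  (∀ B ∈ π, B ≠ ∅) ∧ (∀ B ∈ π, B ⊆ pmSet n) ∧
  (∀ x ∈ pmSet n, ∃! B, B ∈ π ∧ x ∈ B) ∧
  (∀ B ∈ π, negBlock B ∈ π) ∧
  (π.filter (fun B => negBlock B = B)).card ≤ 1

/-- The minimal `Bₙ`-partition `0̂ᴮ`, whose blocks are singletons. -/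
noncomputable def botB (n : ℕ) : Finset (Finset ℤ) := (pmSet n).image (fun x => ({x} : Finset ℤ))

/-- Common refinement (meet) of two partitions: all nonempty pairwise intersections. -/
def meetB (π π' : Finset (Finset ℤ)) : Finset (Finset ℤ) :=
  ((π ×ˢ π').image (fun p => p.1 ∩ p.2)).filter (fun B => B ≠ ∅)

/-- `π` and `π'` intersect minimally. -/
def MinInt (n : ℕ) (π π' : Finset (Finset ℤ)) : Prop := meetB π π' = botB n

/-- Common refinement of a family of partitions of `[±n]`. -/
noncomputable def meetFamily (n : ℕ) {r : ℕ} (πs : Fin r → Finset (Finset ℤ)) : Finset (Finset ℤ) :=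
  (List.ofFn πs).foldl meetB {pmSet n}

/-- The family `πs` is minimally intersecting. -/
def MinIntFam (n : ℕ) {r : ℕ} (πs : Fin r → Finset (Finset ℤ)) : Prop :=
  meetFamily n πs = botB n

/-- `π` has a zero-block of half-size `i₀` (with `i₀ = 0` meaning no zero-block). -/
def zeroBlockHalfSize (π : Finset (Finset ℤ)) (i₀ : ℕ) : Prop :=
  ((π.filter (fun B => negBlock B = B)).sum Finset.card) = 2 * i₀

/-- The block pairs of `π` have sizes `i 0, …, i (k-1)`, listed in any order:
the multiset of sizes of non-zero-blocks is the double of the multiset of the `i α`. -/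
def blockPairSizes (π : Finset (Finset ℤ)) {k : ℕ} (i : Fin k → ℕ) : Prop :=
  ((π.filter (fun B => negBlock B ≠ B)).val.map Finset.card)
    = ((List.ofFn i : List ℕ) : Multiset ℕ) + ((List.ofFn i : List ℕ) : Multiset ℕ)

/-- `π` has exactly `l` block pairs. -/
def numBlockPairs (π : Finset (Finset ℤ)) (l : ℕ) : Prop :=
  (π.filter (fun B => negBlock B ≠ B)).card = 2 * l

/-- `π` has no zero-block. -/
def NoZeroBlock (π : Finset (Finset ℤ)) : Prop := ∀ B ∈ π, negBlock B ≠ B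

/-- Falling factorial `(x)ₙ = x (x-1) ⋯ (x-n+1)` of a real number. -/
noncomputable def ffall (x : ℝ) (n : ℕ) : ℝ := ∏ i ∈ Finset.range n, (x - i)

/-- Signed Stirling number of the first kind `s(n,j)`, defined by
`x(x-1)⋯(x-n+1) = Σ_j s(n,j) xʲ`. -/
noncomputable def stirling1 (n j : ℕ) : ℤ :=
  (∏ i ∈ Finset.range n, (Polynomial.X - Polynomial.C (i : ℤ))).coeff j

/-!
An `r`-tuple of zero-free `Bₙ`-partitions has a zero-free meet `σ`. Choosing in every block of
`σ` a representative, compatibly with negation, identifies the tuples with meet `σ` with the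
minimally intersecting `r`-tuples on a symmetric set of `|σ|` points. Hence
`Nₙʳ = Σₖ S(n,k) N^D_{k,r}`, where `S(n,k)` (`pairCount n k`) counts the zero-free partitions of
`[±n]` with `k` block pairs. Adding `±(n+1)` either as a new block pair or to one of the `2k`
blocks gives `S(n+1,k+1) = S(n,k) + 2(k+1) S(n,k+1)`, that is `xⁿ = Σₖ S(n,k) x(x-2)⋯(x-2k+2)`.
Comparing coefficients, the unitriangular matrix `(S(n,k))` has inverse `(2^(k-j) s(k,j))`, which
inverts the first identity.
-/

namespace TypeB

open Finset

variable {G G' H B : Finset ℤ} {σ σ' π π' ρ τ : Finset (Finset ℤ)} {a : ℤ}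

@[simp] lemma mem_negBlock {B : Finset ℤ} {x : ℤ} : x ∈ negBlock B ↔ -x ∈ B := by
  simp only [negBlock, mem_image]
  exact ⟨by rintro ⟨y, hy, rfl⟩; simpa using hy, fun h => ⟨-x, h, neg_neg x⟩⟩

@[simp] lemma negBlock_negBlock (B : Finset ℤ) : negBlock (negBlock B) = B := by
  ext x; simp

lemma negBlock_injective : Function.Injective negBlock :=
  Function.LeftInverse.injective negBlock_negBlock

lemma negBlock_inter (B C : Finset ℤ) : negBlock (B ∩ C) = negBlock B ∩ negBlock C := by
  ext x; simp

@[simp] lemma negBlock_singleton (x : ℤ) : negBlock {x} = {-x} := by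
  ext y; simp [neg_eq_iff_eq_neg]

lemma negBlock_insert (a : ℤ) (B : Finset ℤ) :
    negBlock (insert a B) = insert (-a) (negBlock B) := by
  ext y; simp [neg_eq_iff_eq_neg]

@[simp] lemma negBlock_nonempty {B : Finset ℤ} : (negBlock B).Nonempty ↔ B.Nonempty := by
  simp [negBlock]

def IsSymm (G : Finset ℤ) : Prop := 0 ∉ G ∧ ∀ x ∈ G, -x ∈ G

lemma IsSymm.neg_mem_iff (hG : IsSymm G) {x : ℤ} : -x ∈ G ↔ x ∈ G :=
  ⟨fun h => by simpa using hG.2 _ h, hG.2 x⟩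

lemma IsSymm.negBlock_eq (hG : IsSymm G) : negBlock G = G := by
  ext x; rw [mem_negBlock, hG.neg_mem_iff]

@[simp] lemma mem_pmSet {n : ℕ} {x : ℤ} : x ∈ pmSet n ↔ x ≠ 0 ∧ -(n : ℤ) ≤ x ∧ x ≤ n := by
  simp [pmSet]

lemma isSymm_pmSet (n : ℕ) : IsSymm (pmSet n) :=
  ⟨by simp, fun x hx => by simp only [mem_pmSet] at hx ⊢; omega⟩

structure IsZeroFreePartition (G : Finset ℤ) (π : Finset (Finset ℤ)) : Prop where
  subset : ∀ B ∈ π, B ⊆ G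
  nonempty : ∀ B ∈ π, B.Nonempty
  cover : ∀ x ∈ G, ∃ B ∈ π, x ∈ B
  eq_of_mem : ∀ B ∈ π, ∀ C ∈ π, ∀ x ∈ B, x ∈ C → B = C
  negBlock_mem : ∀ B ∈ π, negBlock B ∈ π
  neg_notMem : ∀ B ∈ π, ∀ x ∈ B, -x ∉ B

def SameBlock (π : Finset (Finset ℤ)) (x y : ℤ) : Prop := ∃ B ∈ π, x ∈ B ∧ y ∈ B

namespace IsZeroFreePartition

lemma negBlock_ne (h : IsZeroFreePartition G π) {B : Finset ℤ} (hB : B ∈ π) :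
    negBlock B ≠ B := by
  intro hneg
  obtain ⟨x, hx⟩ := h.nonempty B hB
  exact h.neg_notMem B hB x hx (by rw [← hneg, mem_negBlock, neg_neg]; exact hx)

lemma sameBlock_iff (h : IsZeroFreePartition G π) {B : Finset ℤ} {x y : ℤ} (hB : B ∈ π)
    (hx : x ∈ B) : SameBlock π x y ↔ y ∈ B :=
  ⟨fun ⟨C, hC, hxC, hyC⟩ => h.eq_of_mem C hC B hB x hxC hx ▸ hyC, fun hy => ⟨B, hB, hx, hy⟩⟩

lemma sameBlock_refl (h : IsZeroFreePartition G π) {x : ℤ} (hx : x ∈ G) : SameBlock π x x :=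
  let ⟨B, hB, hxB⟩ := h.cover x hx
  ⟨B, hB, hxB, hxB⟩

lemma sameBlock_trans (h : IsZeroFreePartition G π) {x y z : ℤ} (hxy : SameBlock π x y)
    (hyz : SameBlock π y z) : SameBlock π x z :=
  let ⟨_, hB, hx, hy⟩ := hxy
  (h.sameBlock_iff hB hx).2 ((h.sameBlock_iff hB hy).1 hyz)

lemma mem_of_sameBlock (h : IsZeroFreePartition G π) {x y : ℤ} (hxy : SameBlock π x y) :
    x ∈ G :=
  let ⟨B, hB, hx, _⟩ := hxy
  h.subset B hB hx

lemma ext_sameBlock (h : IsZeroFreePartition G π) (h' : IsZeroFreePartition G π')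
    (hrel : ∀ x y, SameBlock π x y ↔ SameBlock π' x y) : π = π' := by
  suffices key : ∀ {σ σ'}, IsZeroFreePartition G σ → IsZeroFreePartition G σ' →
      (∀ x y, SameBlock σ x y ↔ SameBlock σ' x y) → σ ⊆ σ' from
    (key h h' hrel).antisymm (key h' h fun x y => (hrel x y).symm)
  intro σ σ' hσ hσ' hrel B hB
  obtain ⟨x, hx⟩ := hσ.nonempty B hB
  obtain ⟨B', hB', hxB'⟩ := hσ'.cover x (hσ.subset B hB hx)
  have : B = B' := by
    ext y
    rw [← hσ.sameBlock_iff hB hx, ← hσ'.sameBlock_iff hB' hxB', hrel]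
  exact this ▸ hB'

end IsZeroFreePartition

lemma SameBlock.symm {x y : ℤ} (h : SameBlock π x y) : SameBlock π y x :=
  let ⟨B, hB, hx, hy⟩ := h
  ⟨B, hB, hy, hx⟩

def singletons (G : Finset ℤ) : Finset (Finset ℤ) := G.image ({·})

@[simp] lemma mem_singletons {G B : Finset ℤ} : B ∈ singletons G ↔ ∃ x ∈ G, B = {x} := by
  simp [singletons, eq_comm]

lemma card_singletons (G : Finset ℤ) : (singletons G).card = G.card :=
  card_image_of_injective _ singleton_injective

lemma isZeroFreePartition_singletons (hG : IsSymm G) :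
    IsZeroFreePartition G (singletons G) where
  subset := by simp +contextual
  nonempty := by simp +contextual
  cover x hx := ⟨{x}, mem_singletons.2 ⟨x, hx, rfl⟩, mem_singleton_self x⟩
  eq_of_mem := by simp +contextual
  negBlock_mem := by
    simp only [mem_singletons]
    rintro _ ⟨x, hx, rfl⟩
    exact ⟨-x, hG.2 x hx, negBlock_singleton x⟩
  neg_notMem := by
    simp only [mem_singletons]
    rintro _ ⟨x, hx, rfl⟩ y hy
    rw [mem_singleton] at hy ⊢
    subst hy
    exact fun h => hG.1 (by rwa [show y = 0 by omega] at hx)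

lemma sameBlock_singletons {x y : ℤ} :
    SameBlock (singletons G) x y ↔ x ∈ G ∧ x = y := by
  constructor
  · rintro ⟨B, hB, hx, hy⟩
    obtain ⟨z, hz, rfl⟩ := mem_singletons.1 hB
    rw [mem_singleton] at hx hy
    exact ⟨hx ▸ hz, hx.trans hy.symm⟩
  · rintro ⟨hx, rfl⟩
    exact ⟨{x}, mem_singletons.2 ⟨x, hx, rfl⟩, mem_singleton_self x, mem_singleton_self x⟩

lemma mem_meetB {C : Finset ℤ} :
    C ∈ meetB π π' ↔ C.Nonempty ∧ ∃ B ∈ π, ∃ B' ∈ π', C = B ∩ B' := by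
  simp only [meetB, mem_filter, mem_image, mem_product, Prod.exists, ← nonempty_iff_ne_empty]
  constructor
  · rintro ⟨⟨B, B', ⟨hB, hB'⟩, rfl⟩, hne⟩
    exact ⟨hne, B, hB, B', hB', rfl⟩
  · rintro ⟨hne, B, hB, B', hB', rfl⟩
    exact ⟨⟨B, B', ⟨hB, hB'⟩, rfl⟩, hne⟩

lemma sameBlock_meetB {x y : ℤ} :
    SameBlock (meetB π π') x y ↔ SameBlock π x y ∧ SameBlock π' x y := by
  constructor
  · rintro ⟨C, hC, hx, hy⟩
    obtain ⟨_, B, hB, B', hB', rfl⟩ := mem_meetB.1 hC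
    rw [mem_inter] at hx hy
    exact ⟨⟨B, hB, hx.1, hy.1⟩, ⟨B', hB', hx.2, hy.2⟩⟩
  · rintro ⟨⟨B, hB, hxB, hyB⟩, ⟨B', hB', hxB', hyB'⟩⟩
    exact ⟨B ∩ B', mem_meetB.2 ⟨⟨x, mem_inter.2 ⟨hxB, hxB'⟩⟩, B, hB, B', hB', rfl⟩,
      mem_inter.2 ⟨hxB, hxB'⟩, mem_inter.2 ⟨hyB, hyB'⟩⟩

lemma isZeroFreePartition_meetB {π π' : Finset (Finset ℤ)}
    (h : IsZeroFreePartition G π) (h' : IsZeroFreePartition G π') :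
    IsZeroFreePartition G (meetB π π') where
  subset C hC := by
    obtain ⟨_, B, hB, B', -, rfl⟩ := mem_meetB.1 hC
    exact inter_subset_left.trans (h.subset B hB)
  nonempty C hC := (mem_meetB.1 hC).1
  cover x hx := by
    obtain ⟨B, hB, hxB⟩ := h.cover x hx
    obtain ⟨B', hB', hxB'⟩ := h'.cover x hx
    have hxC : x ∈ B ∩ B' := mem_inter.2 ⟨hxB, hxB'⟩
    exact ⟨B ∩ B', mem_meetB.2 ⟨⟨x, hxC⟩, B, hB, B', hB', rfl⟩, hxC⟩
  eq_of_mem C hC D hD x hxC hxD := by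
    obtain ⟨_, B, hB, B', hB', rfl⟩ := mem_meetB.1 hC
    obtain ⟨_, E, hE, E', hE', rfl⟩ := mem_meetB.1 hD
    rw [mem_inter] at hxC hxD
    rw [h.eq_of_mem B hB E hE x hxC.1 hxD.1, h'.eq_of_mem B' hB' E' hE' x hxC.2 hxD.2]
  negBlock_mem C hC := by
    obtain ⟨hne, B, hB, B', hB', rfl⟩ := mem_meetB.1 hC
    rw [negBlock_inter]
    exact mem_meetB.2 ⟨by rwa [← negBlock_inter, negBlock_nonempty], _,
      h.negBlock_mem B hB, _, h'.negBlock_mem B' hB', rfl⟩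
  neg_notMem C hC x hx hnx := by
    obtain ⟨_, B, hB, B', -, rfl⟩ := mem_meetB.1 hC
    exact h.neg_notMem B hB x (mem_inter.1 hx).1 (mem_inter.1 hnx).1

lemma meetB_singleton_of_isZeroFreePartition
    (h : IsZeroFreePartition G π) : meetB {G} π = π := by
  ext C
  simp only [mem_meetB, mem_singleton, exists_eq_left]
  constructor
  · rintro ⟨-, B, hB, rfl⟩
    rwa [inter_eq_right.2 (h.subset B hB)]
  · exact fun hC => ⟨h.nonempty C hC, C, hC, (inter_eq_right.2 (h.subset C hC)).symm⟩

lemma sameBlock_foldl_meetB (l : List (Finset (Finset ℤ))) (σ : Finset (Finset ℤ)) {x y : ℤ} :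
    SameBlock (l.foldl meetB σ) x y ↔ SameBlock σ x y ∧ ∀ π ∈ l, SameBlock π x y := by
  induction l generalizing σ with
  | nil => simp
  | cons π l ih => simp [ih, sameBlock_meetB, and_assoc]

lemma isZeroFreePartition_foldl_meetB (l : List (Finset (Finset ℤ)))
    (hσ : IsZeroFreePartition G σ) (hl : ∀ π ∈ l, IsZeroFreePartition G π) :
    IsZeroFreePartition G (l.foldl meetB σ) := by
  induction l generalizing σ with
  | nil => exact hσ
  | cons π l ih =>
    exact ih (isZeroFreePartition_meetB hσ (hl π (List.mem_cons_self ..)))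
      fun π' h => hl π' (List.mem_cons_of_mem _ h)

def meetAll (G : Finset ℤ) {r : ℕ} (πs : Fin r → Finset (Finset ℤ)) : Finset (Finset ℤ) :=
  (List.ofFn πs).foldl meetB {G}

lemma sameBlock_meetAll {r : ℕ} {πs : Fin r → Finset (Finset ℤ)} {x y : ℤ} :
    SameBlock (meetAll G πs) x y ↔ (x ∈ G ∧ y ∈ G) ∧ ∀ t, SameBlock (πs t) x y := by
  rw [meetAll, sameBlock_foldl_meetB]
  simp [SameBlock]

lemma isZeroFreePartition_meetAll {r : ℕ} (hr : r ≠ 0)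
    {πs : Fin r → Finset (Finset ℤ)} (h : ∀ t, IsZeroFreePartition G (πs t)) :
    IsZeroFreePartition G (meetAll G πs) := by
  obtain ⟨r, rfl⟩ := Nat.exists_eq_succ_of_ne_zero hr
  rw [meetAll, List.ofFn_succ, List.foldl_cons, meetB_singleton_of_isZeroFreePartition (h 0)]
  exact isZeroFreePartition_foldl_meetB _ (h 0) (by simp [List.mem_ofFn, h])

def IsMinIntersecting (G : Finset ℤ) {r : ℕ} (πs : Fin r → Finset (Finset ℤ)) : Prop :=
  ∀ x ∈ G, ∀ y, (∀ t, SameBlock (πs t) x y) → x = y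

lemma meetAll_eq_singletons_iff (hG : IsSymm G) {r : ℕ} (hr : r ≠ 0)
    {πs : Fin r → Finset (Finset ℤ)} (h : ∀ t, IsZeroFreePartition G (πs t)) :
    meetAll G πs = singletons G ↔ IsMinIntersecting G πs := by
  have ht : Nonempty (Fin r) := ⟨⟨0, Nat.pos_of_ne_zero hr⟩⟩
  constructor
  · intro heq x hx y hxy
    have := sameBlock_meetAll.2 ⟨⟨hx, (h ht.some).mem_of_sameBlock (hxy ht.some).symm⟩, hxy⟩
    exact (sameBlock_singletons.1 (heq ▸ this)).2
  · intro hkey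
    refine (isZeroFreePartition_meetAll hr h).ext_sameBlock (isZeroFreePartition_singletons hG)
      fun x y => ?_
    rw [sameBlock_meetAll, sameBlock_singletons]
    constructor
    · rintro ⟨⟨hx, -⟩, hxy⟩
      exact ⟨hx, hkey x hx y hxy⟩
    · rintro ⟨hx, rfl⟩
      exact ⟨⟨hx, hx⟩, fun t => (h t).sameBlock_refl hx⟩

open scoped Classical in
noncomputable def zeroFreePartitions (G : Finset ℤ) : Finset (Finset (Finset ℤ)) :=
  G.powerset.powerset.filter (IsZeroFreePartition G)

lemma mem_zeroFreePartitions :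
    π ∈ zeroFreePartitions G ↔ IsZeroFreePartition G π := by
  simp only [zeroFreePartitions, mem_filter, mem_powerset, and_iff_right_iff_imp]
  exact fun h B hB => mem_powerset.2 (h.subset B hB)

noncomputable def minIntTuples (G : Finset ℤ) (r : ℕ) : Finset (Fin r → Finset (Finset ℤ)) :=
  (Fintype.piFinset fun _ => zeroFreePartitions G).filter (meetAll G · = singletons G)

lemma mem_minIntTuples {r : ℕ} {πs : Fin r → Finset (Finset ℤ)} :
    πs ∈ minIntTuples G r ↔
      (∀ t, IsZeroFreePartition G (πs t)) ∧ meetAll G πs = singletons G := by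
  simp [minIntTuples, mem_zeroFreePartitions]

lemma mem_minIntTuples_iff (hG : IsSymm G) {r : ℕ} (hr : r ≠ 0)
    {πs : Fin r → Finset (Finset ℤ)} :
    πs ∈ minIntTuples G r ↔
      (∀ t, IsZeroFreePartition G (πs t)) ∧ IsMinIntersecting G πs := by
  rw [mem_minIntTuples]
  exact and_congr_right fun h => meetAll_eq_singletons_iff hG hr h

structure IsOddBij (f g : ℤ → ℤ) (G G' : Finset ℤ) : Prop where
  mapsTo : ∀ x ∈ G, f x ∈ G'
  mapsTo_inv : ∀ y ∈ G', g y ∈ G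
  left_inv : ∀ x ∈ G, g (f x) = x
  right_inv : ∀ y ∈ G', f (g y) = y
  map_neg : ∀ x ∈ G, f (-x) = -f x

namespace IsOddBij

variable {f g : ℤ → ℤ}

lemma symm (e : IsOddBij f g G G') (hG : IsSymm G) : IsOddBij g f G' G where
  mapsTo := e.mapsTo_inv
  mapsTo_inv := e.mapsTo
  left_inv := e.right_inv
  right_inv := e.left_inv
  map_neg y hy := by
    have hgy := e.mapsTo_inv y hy
    conv_lhs => rw [← e.right_inv y hy, ← e.map_neg _ hgy]
    exact e.left_inv _ (hG.2 _ hgy)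

lemma injOn (e : IsOddBij f g G G') {x y : ℤ} (hx : x ∈ G) (hy : y ∈ G) (h : f x = f y) :
    x = y := by
  rw [← e.left_inv x hx, h, e.left_inv y hy]

lemma image_image (e : IsOddBij f g G G') {B : Finset ℤ} (hB : B ⊆ G) :
    (B.image f).image g = B := by
  rw [Finset.image_image]
  exact (image_congr fun x hx => e.left_inv x (hB hx)).trans image_id

lemma image_negBlock (e : IsOddBij f g G G') {B : Finset ℤ} (hB' : negBlock B ⊆ G) :
    (negBlock B).image f = negBlock (B.image f) := by
  ext y
  simp only [mem_image, mem_negBlock]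
  constructor
  · rintro ⟨x, hx, rfl⟩
    exact ⟨-x, hx, e.map_neg x (hB' (mem_negBlock.2 hx))⟩
  · rintro ⟨x, hx, hfx⟩
    exact ⟨-x, by rwa [neg_neg], by rw [← neg_neg (f (-x)), ← e.map_neg _ (hB' (by simpa)),
      neg_neg, hfx, neg_neg]⟩

lemma isZeroFreePartition_image (e : IsOddBij f g G G')
    (h : IsZeroFreePartition G π) : IsZeroFreePartition G' (π.image (image f)) where
  subset := by
    simp only [mem_image, forall_exists_index, and_imp, forall_apply_eq_imp_iff₂]
    intro B hB y hy
    obtain ⟨x, hx, rfl⟩ := mem_image.1 hy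
    exact e.mapsTo x (h.subset B hB hx)
  nonempty := by
    simp only [mem_image, forall_exists_index, and_imp, forall_apply_eq_imp_iff₂]
    exact fun B hB => (h.nonempty B hB).image f
  cover y hy := by
    obtain ⟨B, hB, hB'⟩ := h.cover (g y) (e.mapsTo_inv y hy)
    exact ⟨B.image f, mem_image_of_mem _ hB, mem_image.2 ⟨g y, hB', e.right_inv y hy⟩⟩
  eq_of_mem := by
    intro _ hB' _ hC' y hyB hyC
    obtain ⟨B, hB, rfl⟩ := mem_image.1 hB'
    obtain ⟨C, hC, rfl⟩ := mem_image.1 hC'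
    obtain ⟨b, hb, rfl⟩ := mem_image.1 hyB
    obtain ⟨c, hc, hcb⟩ := mem_image.1 hyC
    rw [h.eq_of_mem B hB C hC b hb (e.injOn (h.subset C hC hc) (h.subset B hB hb) hcb ▸ hc)]
  negBlock_mem := by
    simp only [mem_image, forall_exists_index, and_imp, forall_apply_eq_imp_iff₂]
    intro B hB
    exact ⟨negBlock B, h.negBlock_mem B hB,
      e.image_negBlock (h.subset _ (h.negBlock_mem B hB))⟩
  neg_notMem := by
    intro _ hB' y hyB hny
    obtain ⟨B, hB, rfl⟩ := mem_image.1 hB'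
    obtain ⟨b, hb, rfl⟩ := mem_image.1 hyB
    obtain ⟨c, hc, hcb⟩ := mem_image.1 hny
    have hbG := h.subset B hB hb
    have hnb : -b ∈ G := h.subset _ (h.negBlock_mem B hB) (by rwa [mem_negBlock, neg_neg])
    rw [← e.map_neg b hbG] at hcb
    exact h.neg_notMem B hB b hb (e.injOn (h.subset B hB hc) hnb hcb ▸ hc)

lemma sameBlock_image (e : IsOddBij f g G G') (hπ : ∀ B ∈ π, B ⊆ G)
    {x y : ℤ} (hx : x ∈ G) (hy : y ∈ G) :
    SameBlock (π.image (image f)) (f x) (f y) ↔ SameBlock π x y := by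
  constructor
  · rintro ⟨_, hB', hfx, hfy⟩
    obtain ⟨B, hB, rfl⟩ := mem_image.1 hB'
    obtain ⟨a, ha, hax⟩ := mem_image.1 hfx
    obtain ⟨b, hb, hby⟩ := mem_image.1 hfy
    rw [← e.injOn (hπ B hB ha) hx hax, ← e.injOn (hπ B hB hb) hy hby]
    exact ⟨B, hB, ha, hb⟩
  · rintro ⟨B, hB, hxB, hyB⟩
    exact ⟨B.image f, mem_image_of_mem _ hB, mem_image_of_mem _ hxB, mem_image_of_mem _ hyB⟩

lemma isMinIntersecting_image (e : IsOddBij f g G G') {r : ℕ} (hr : r ≠ 0)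
    {πs : Fin r → Finset (Finset ℤ)} (h : ∀ t, IsZeroFreePartition G (πs t))
    (hmin : IsMinIntersecting G πs) :
    IsMinIntersecting G' fun t => (πs t).image (image f) := by
  intro y hy z hyz
  have t₀ : Fin r := ⟨0, Nat.pos_of_ne_zero hr⟩
  have hz := (e.isZeroFreePartition_image (h t₀)).mem_of_sameBlock (hyz t₀).symm
  rw [← e.right_inv y hy, ← e.right_inv z hz] at hyz ⊢
  refine congrArg f (hmin _ (e.mapsTo_inv y hy) _ fun t => ?_)
  exact (e.sameBlock_image (h t).subset (e.mapsTo_inv y hy) (e.mapsTo_inv z hz)).1 (hyz t)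

lemma blocks_image_image (e : IsOddBij f g G G')
    (hπ : ∀ B ∈ π, B ⊆ G) : (π.image (image f)).image (image g) = π := by
  rw [Finset.image_image]
  exact (image_congr fun B hB => e.image_image (hπ B hB)).trans image_id

lemma card_minIntTuples_eq (e : IsOddBij f g G G') (hG : IsSymm G) (hG' : IsSymm G') {r : ℕ}
    (hr : r ≠ 0) : (minIntTuples G r).card = (minIntTuples G' r).card := by
  refine card_bij' (fun πs _ t => (πs t).image (image f)) (fun πs _ t => (πs t).image (image g))
    ?_ ?_ ?_ ?_
  · intro πs hπs
    rw [mem_minIntTuples_iff hG hr] at hπs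
    rw [mem_minIntTuples_iff hG' hr]
    exact ⟨fun t => e.isZeroFreePartition_image (hπs.1 t), e.isMinIntersecting_image hr hπs.1 hπs.2⟩
  · intro πs hπs
    rw [mem_minIntTuples_iff hG' hr] at hπs
    rw [mem_minIntTuples_iff hG hr]
    exact ⟨fun t => (e.symm hG).isZeroFreePartition_image (hπs.1 t),
      (e.symm hG).isMinIntersecting_image hr hπs.1 hπs.2⟩
  · intro πs hπs
    funext t
    exact e.blocks_image_image ((mem_minIntTuples.1 hπs).1 t).subset
  · intro πs hπs
    funext t
    exact (e.symm hG).blocks_image_image ((mem_minIntTuples.1 hπs).1 t).subset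

end IsOddBij

lemma IsSymm.card_eq (hG : IsSymm G) : G.card = 2 * (G.filter (0 < ·)).card := by
  have hneg : G.filter (¬ 0 < ·) = (G.filter (0 < ·)).image (- ·) := by
    ext x
    simp only [mem_filter, mem_image]
    constructor
    · rintro ⟨hx, hx0⟩
      have : x ≠ 0 := fun h => hG.1 (h ▸ hx)
      exact ⟨-x, ⟨hG.2 x hx, by omega⟩, neg_neg x⟩
    · rintro ⟨y, ⟨hy, hy0⟩, rfl⟩
      exact ⟨hG.2 y hy, by omega⟩
  rw [← card_filter_add_card_filter_not (0 < ·), hneg, card_image_of_injective _ neg_injective]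
  ring

lemma card_pmSet (n : ℕ) : (pmSet n).card = 2 * n := by
  rw [(isSymm_pmSet n).card_eq]
  have : (pmSet n).filter (0 < ·) = Icc 1 (n : ℤ) := by
    ext x; simp only [mem_filter, mem_pmSet, mem_Icc]; omega
  simp [this]

def oddExt (F : ℤ → ℤ) (x : ℤ) : ℤ := if 0 < x then F x else -F (-x)

lemma oddExt_neg (F : ℤ → ℤ) {x : ℤ} (hx : x ≠ 0) : oddExt F (-x) = -oddExt F x := by
  rcases lt_or_gt_of_ne hx with h | h
  · simp [oddExt, h, h.not_gt]
  · simp [oddExt, h, h.not_gt]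

lemma oddExt_mem {F : ℤ → ℤ} (hF : Set.MapsTo F ↑(G.filter (0 < ·)) ↑(G'.filter (0 < ·)))
    (hG : IsSymm G) (hG' : IsSymm G') {x : ℤ} (hx : x ∈ G) : oddExt F x ∈ G' := by
  have hx0 : x ≠ 0 := fun h => hG.1 (h ▸ hx)
  unfold oddExt
  split_ifs with h
  · exact (mem_filter.1 (hF (mem_filter.2 ⟨hx, h⟩))).1
  · exact hG'.2 _ (mem_filter.1 (hF (mem_filter.2 ⟨hG.2 x hx, by omega⟩))).1

lemma oddExt_oddExt {F F' : ℤ → ℤ} (hF : Set.MapsTo F ↑(G.filter (0 < ·)) ↑(G'.filter (0 < ·)))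
    (hG : IsSymm G) (hinv : Set.LeftInvOn F' F ↑(G.filter (0 < ·))) {x : ℤ} (hx : x ∈ G) :
    oddExt F' (oddExt F x) = x := by
  have hx0 : x ≠ 0 := fun h => hG.1 (h ▸ hx)
  rcases lt_or_gt_of_ne hx0 with h | h
  · have hnx : -x ∈ G.filter (0 < ·) := mem_filter.2 ⟨hG.2 x hx, by omega⟩
    have hpos : 0 < F (-x) := (mem_filter.1 (hF hnx)).2
    simp [oddExt, h.not_gt, hpos.not_gt, hinv hnx]
  · have hx' : x ∈ G.filter (0 < ·) := mem_filter.2 ⟨hx, h⟩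
    simp [oddExt, h, (mem_filter.1 (hF hx')).2, hinv hx']

lemma exists_isOddBij (hG : IsSymm G) (hG' : IsSymm G')
    (hcard : G.card = G'.card) : ∃ f g, IsOddBij f g G G' := by
  have hpos : (↑(G.filter (0 < ·)) : Set ℤ).encard = (↑(G'.filter (0 < ·)) : Set ℤ).encard := by
    rw [Set.encard_coe_eq_coe_finsetCard, Set.encard_coe_eq_coe_finsetCard]
    rw [hG.card_eq, hG'.card_eq] at hcard
    exact_mod_cast (by omega : (G.filter (0 < ·)).card = (G'.filter (0 < ·)).card)
  obtain ⟨F, hF⟩ := Set.Finite.exists_bijOn_of_encard_eq (Finset.finite_toSet _) hpos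
  have hinv := hF.invOn_invFunOn
  have hF' := hF.symm hinv.symm
  exact ⟨oddExt F, oddExt (Function.invFunOn F _), fun x => oddExt_mem hF.mapsTo hG hG',
    fun y => oddExt_mem hF'.mapsTo hG' hG, fun x => oddExt_oddExt hF.mapsTo hG hinv.1,
    fun y => oddExt_oddExt hF'.mapsTo hG' hinv.2,
    fun x hx => oddExt_neg F (fun h => hG.1 (h ▸ hx))⟩

noncomputable def absMin (B : Finset ℤ) : ℕ := sInf (Int.natAbs '' ↑B)

noncomputable def rep (B : Finset ℤ) : ℤ := if (absMin B : ℤ) ∈ B then absMin B else -absMin B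

lemma rep_mem {B : Finset ℤ} (hB : B.Nonempty) : rep B ∈ B := by
  obtain ⟨x, hx, hxm⟩ := Nat.sInf_mem ((coe_nonempty.2 hB).image Int.natAbs)
  unfold rep
  split_ifs with h
  · exact h
  · rcases Int.natAbs_eq x with hx' | hx' <;> rw [hxm] at hx'
    · exact absurd (hx' ▸ hx) h
    · exact hx' ▸ hx

lemma absMin_negBlock (B : Finset ℤ) : absMin (negBlock B) = absMin B := by
  rw [absMin, absMin, negBlock, coe_image, Set.image_image]
  simp_rw [Int.natAbs_neg]

lemma rep_negBlock {B : Finset ℤ} (hB : B.Nonempty) (hneg : ∀ x ∈ B, -x ∉ B) :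
    rep (negBlock B) = -rep B := by
  have hm := rep_mem hB
  unfold rep at hm ⊢
  simp only [absMin_negBlock, mem_negBlock]
  by_cases h : (absMin B : ℤ) ∈ B
  · rw [if_pos h, if_neg (hneg _ h)]
  · rw [if_neg h] at hm ⊢
    rw [if_pos hm, neg_neg]

noncomputable def reps (σ : Finset (Finset ℤ)) : Finset ℤ := σ.image rep

def Refines (σ π : Finset (Finset ℤ)) : Prop := ∀ x y, SameBlock σ x y → SameBlock π x y

namespace IsZeroFreePartition

lemma rep_mem (hσ : IsZeroFreePartition G σ) {B : Finset ℤ} (hB : B ∈ σ) : rep B ∈ B :=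
  TypeB.rep_mem (hσ.nonempty B hB)

lemma rep_injOn (hσ : IsZeroFreePartition G σ) {B C : Finset ℤ} (hB : B ∈ σ) (hC : C ∈ σ)
    (h : rep B = rep C) : B = C :=
  hσ.eq_of_mem B hB C hC _ (hσ.rep_mem hB) (h ▸ hσ.rep_mem hC)

lemma reps_subset (hσ : IsZeroFreePartition G σ) : reps σ ⊆ G := by
  intro a ha
  obtain ⟨B, hB, rfl⟩ := mem_image.1 ha
  exact hσ.subset B hB (hσ.rep_mem hB)

lemma card_reps (hσ : IsZeroFreePartition G σ) : (reps σ).card = σ.card :=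
  card_image_of_injOn fun _ hB _ hC h => hσ.rep_injOn hB hC h

lemma isSymm_reps (hG : IsSymm G) (hσ : IsZeroFreePartition G σ) : IsSymm (reps σ) := by
  refine ⟨fun h => hG.1 (hσ.reps_subset h), fun a ha => ?_⟩
  obtain ⟨B, hB, rfl⟩ := mem_image.1 ha
  rw [← rep_negBlock (hσ.nonempty B hB) (hσ.neg_notMem B hB)]
  exact mem_image_of_mem _ (hσ.negBlock_mem B hB)

lemma inter_reps (hσ : IsZeroFreePartition G σ) {B : Finset ℤ} (hB : B ∈ σ) :
    B ∩ reps σ = {rep B} := by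
  ext a
  simp only [mem_inter, mem_singleton, reps, mem_image]
  constructor
  · rintro ⟨haB, C, hC, rfl⟩
    rw [hσ.eq_of_mem B hB C hC _ haB (hσ.rep_mem hC)]
  · rintro rfl
    exact ⟨hσ.rep_mem hB, B, hB, rfl⟩

lemma subset_of_refines (hπ : IsZeroFreePartition G π) (hle : Refines σ π) {B C : Finset ℤ}
    {x : ℤ} (hB : B ∈ π) (hxB : x ∈ B) (hC : C ∈ σ) (hxC : x ∈ C) : C ⊆ B :=
  fun _ hy => (hπ.sameBlock_iff hB hxB).1 (hle _ _ ⟨C, hC, hxC, hy⟩)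

end IsZeroFreePartition

noncomputable def restrict (σ π : Finset (Finset ℤ)) : Finset (Finset ℤ) :=
  π.image (· ∩ reps σ)

noncomputable def liftBlock (σ : Finset (Finset ℤ)) (B : Finset ℤ) : Finset ℤ :=
  (σ.filter (rep · ∈ B)).biUnion id

noncomputable def lift (σ τ : Finset (Finset ℤ)) : Finset (Finset ℤ) := τ.image (liftBlock σ)

lemma mem_liftBlock {B : Finset ℤ} {x : ℤ} : x ∈ liftBlock σ B ↔ ∃ C ∈ σ, rep C ∈ B ∧ x ∈ C := by
  simp [liftBlock, and_assoc]

lemma sameBlock_restrict {a b : ℤ} (ha : a ∈ reps σ) :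
    SameBlock (restrict σ π) a b ↔ SameBlock π a b ∧ b ∈ reps σ := by
  constructor
  · rintro ⟨D, hD, haD, hbD⟩
    obtain ⟨B, hB, rfl⟩ := mem_image.1 hD
    exact ⟨⟨B, hB, (mem_inter.1 haD).1, (mem_inter.1 hbD).1⟩, (mem_inter.1 hbD).2⟩
  · rintro ⟨⟨B, hB, haB, hbB⟩, hb⟩
    exact ⟨B ∩ reps σ, mem_image_of_mem _ hB, mem_inter.2 ⟨haB, ha⟩, mem_inter.2 ⟨hbB, hb⟩⟩

namespace IsZeroFreePartition

lemma rep_mem_inter_reps (hσ : IsZeroFreePartition G σ) (hπ : IsZeroFreePartition G π)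
    (hle : Refines σ π) (hB : B ∈ π) {x : ℤ} (hx : x ∈ B) {C : Finset ℤ} (hC : C ∈ σ)
    (hxC : x ∈ C) :
    rep C ∈ B ∩ reps σ :=
  mem_inter.2 ⟨hπ.subset_of_refines hle hB hx hC hxC (hσ.rep_mem hC), mem_image_of_mem _ hC⟩

lemma isZeroFreePartition_restrict (hσ : IsZeroFreePartition G σ) (hG : IsSymm G)
    (hπ : IsZeroFreePartition G π) (hle : Refines σ π) :
    IsZeroFreePartition (reps σ) (restrict σ π) where
  subset D hD := by
    obtain ⟨B, -, rfl⟩ := mem_image.1 hD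
    exact inter_subset_right
  nonempty D hD := by
    obtain ⟨B, hB, rfl⟩ := mem_image.1 hD
    obtain ⟨x, hx⟩ := hπ.nonempty B hB
    obtain ⟨C, hC, hxC⟩ := hσ.cover x (hπ.subset B hB hx)
    exact ⟨_, hσ.rep_mem_inter_reps hπ hle hB hx hC hxC⟩
  cover a ha := by
    obtain ⟨B, hB, haB⟩ := hπ.cover a (hσ.reps_subset ha)
    exact ⟨B ∩ reps σ, mem_image_of_mem _ hB, mem_inter.2 ⟨haB, ha⟩⟩
  eq_of_mem D hD E hE a haD haE := by
    obtain ⟨B, hB, rfl⟩ := mem_image.1 hD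
    obtain ⟨C, hC, rfl⟩ := mem_image.1 hE
    rw [hπ.eq_of_mem B hB C hC a (mem_inter.1 haD).1 (mem_inter.1 haE).1]
  negBlock_mem D hD := by
    obtain ⟨B, hB, rfl⟩ := mem_image.1 hD
    rw [negBlock_inter, (hσ.isSymm_reps hG).negBlock_eq]
    exact mem_image_of_mem _ (hπ.negBlock_mem B hB)
  neg_notMem D hD a ha hna := by
    obtain ⟨B, hB, rfl⟩ := mem_image.1 hD
    exact hπ.neg_notMem B hB a (mem_inter.1 ha).1 (mem_inter.1 hna).1

lemma liftBlock_inter_reps (hσ : IsZeroFreePartition G σ) {B : Finset ℤ} (hB : B ⊆ reps σ) :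
    liftBlock σ B ∩ reps σ = B := by
  ext a
  simp only [mem_inter, mem_liftBlock]
  constructor
  · rintro ⟨⟨C, hC, hrC, haC⟩, ha⟩
    obtain ⟨C', hC', rfl⟩ := mem_image.1 ha
    rwa [hσ.eq_of_mem C' hC' C hC _ (hσ.rep_mem hC') haC]
  · intro ha
    obtain ⟨C, hC, rfl⟩ := mem_image.1 (hB ha)
    exact ⟨⟨C, hC, ha, hσ.rep_mem hC⟩, hB ha⟩

lemma liftBlock_negBlock (hσ : IsZeroFreePartition G σ) (B : Finset ℤ) :
    liftBlock σ (negBlock B) = negBlock (liftBlock σ B) := by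
  ext x
  simp only [mem_negBlock, mem_liftBlock]
  constructor
  all_goals
    rintro ⟨C, hC, hrC, hxC⟩
    refine ⟨negBlock C, hσ.negBlock_mem C hC, ?_, by simpa using hxC⟩
    rw [rep_negBlock (hσ.nonempty C hC) (hσ.neg_notMem C hC)]
    simpa using hrC

lemma isZeroFreePartition_lift (hσ : IsZeroFreePartition G σ) {τ : Finset (Finset ℤ)}
    (hτ : IsZeroFreePartition (reps σ) τ) : IsZeroFreePartition G (lift σ τ) where
  subset D hD x hx := by
    obtain ⟨B, -, rfl⟩ := mem_image.1 hD
    obtain ⟨C, hC, -, hxC⟩ := mem_liftBlock.1 hx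
    exact hσ.subset C hC hxC
  nonempty D hD := by
    obtain ⟨B, hB, rfl⟩ := mem_image.1 hD
    obtain ⟨a, ha⟩ := hτ.nonempty B hB
    obtain ⟨C, hC, rfl⟩ := mem_image.1 (hτ.subset B hB ha)
    exact ⟨rep C, mem_liftBlock.2 ⟨C, hC, ha, hσ.rep_mem hC⟩⟩
  cover x hx := by
    obtain ⟨C, hC, hxC⟩ := hσ.cover x hx
    obtain ⟨B, hB, hrB⟩ := hτ.cover (rep C) (mem_image_of_mem _ hC)
    exact ⟨liftBlock σ B, mem_image_of_mem _ hB, mem_liftBlock.2 ⟨C, hC, hrB, hxC⟩⟩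
  eq_of_mem D hD E hE x hxD hxE := by
    obtain ⟨B, hB, rfl⟩ := mem_image.1 hD
    obtain ⟨B', hB', rfl⟩ := mem_image.1 hE
    obtain ⟨C, hC, hrC, hxC⟩ := mem_liftBlock.1 hxD
    obtain ⟨C', hC', hrC', hxC'⟩ := mem_liftBlock.1 hxE
    rw [hσ.eq_of_mem C hC C' hC' x hxC hxC'] at hrC
    rw [hτ.eq_of_mem B hB B' hB' _ hrC hrC']
  negBlock_mem D hD := by
    obtain ⟨B, hB, rfl⟩ := mem_image.1 hD
    rw [← hσ.liftBlock_negBlock]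
    exact mem_image_of_mem _ (hτ.negBlock_mem B hB)
  neg_notMem D hD x hx hnx := by
    obtain ⟨B, hB, rfl⟩ := mem_image.1 hD
    obtain ⟨C, hC, hrC, hxC⟩ := mem_liftBlock.1 hx
    obtain ⟨C', hC', hrC', hxC'⟩ := mem_liftBlock.1 hnx
    have : C' = negBlock C :=
      hσ.eq_of_mem _ hC' _ (hσ.negBlock_mem C hC) _ hxC' (by rwa [mem_negBlock, neg_neg])
    rw [this, rep_negBlock (hσ.nonempty C hC) (hσ.neg_notMem C hC)] at hrC'
    exact hτ.neg_notMem B hB _ hrC hrC'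

lemma refines_lift (hτ : IsZeroFreePartition (reps σ) τ) : Refines σ (lift σ τ) := by
  rintro x y ⟨C, hC, hxC, hyC⟩
  obtain ⟨B, hB, hrB⟩ := hτ.cover (rep C) (mem_image_of_mem _ hC)
  exact ⟨liftBlock σ B, mem_image_of_mem _ hB, mem_liftBlock.2 ⟨C, hC, hrB, hxC⟩,
    mem_liftBlock.2 ⟨C, hC, hrB, hyC⟩⟩

lemma restrict_lift (hσ : IsZeroFreePartition G σ) {τ : Finset (Finset ℤ)}
    (hτ : IsZeroFreePartition (reps σ) τ) : restrict σ (lift σ τ) = τ := by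
  rw [restrict, lift, Finset.image_image]
  exact (image_congr fun B hB => hσ.liftBlock_inter_reps (hτ.subset B hB)).trans image_id

lemma lift_restrict (hσ : IsZeroFreePartition G σ) (hπ : IsZeroFreePartition G π)
    (hle : Refines σ π) : lift σ (restrict σ π) = π := by
  rw [restrict, lift, Finset.image_image]
  refine (image_congr fun B hB => ?_).trans image_id
  ext x
  simp only [Function.comp_apply, id_eq, mem_liftBlock]
  constructor
  · rintro ⟨C, hC, hrC, hxC⟩
    exact hπ.subset_of_refines hle hB (mem_inter.1 hrC).1 hC (hσ.rep_mem hC) hxC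
  · intro hx
    obtain ⟨C, hC, hxC⟩ := hσ.cover x (hπ.subset B hB hx)
    exact ⟨C, hC, hσ.rep_mem_inter_reps hπ hle hB hx hC hxC, hxC⟩

lemma meetAll_eq_iff (hσ : IsZeroFreePartition G σ) {r : ℕ} (hr : r ≠ 0)
    {πs : Fin r → Finset (Finset ℤ)} (hπs : ∀ t, IsZeroFreePartition G (πs t))
    (hle : ∀ t, Refines σ (πs t)) :
    meetAll G πs = σ ↔ IsMinIntersecting (reps σ) fun t => restrict σ (πs t) := by
  have t₀ : Fin r := ⟨0, Nat.pos_of_ne_zero hr⟩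
  constructor
  · rintro heq a ha b hab
    have hab' t := (sameBlock_restrict ha).1 (hab t)
    have hb := (hab' t₀).2
    have hrel := sameBlock_meetAll.2 ⟨⟨hσ.reps_subset ha, hσ.reps_subset hb⟩, fun t => (hab' t).1⟩
    obtain ⟨C, hC, haC, hbC⟩ := heq ▸ hrel
    have ha' : a ∈ C ∩ reps σ := mem_inter.2 ⟨haC, ha⟩
    have hb' : b ∈ C ∩ reps σ := mem_inter.2 ⟨hbC, hb⟩
    rw [hσ.inter_reps hC, mem_singleton] at ha' hb'
    rw [ha', hb']
  · intro hmin
    refine (isZeroFreePartition_meetAll hr hπs).ext_sameBlock hσ fun x y => ?_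
    rw [sameBlock_meetAll]
    constructor
    · rintro ⟨⟨hx, hy⟩, hxy⟩
      obtain ⟨C, hC, hxC⟩ := hσ.cover x hx
      obtain ⟨D, hD, hyD⟩ := hσ.cover y hy
      have hCD : rep C = rep D := by
        refine hmin _ (mem_image_of_mem _ hC) _ fun t => (sameBlock_restrict
          (mem_image_of_mem _ hC)).2 ⟨?_, mem_image_of_mem _ hD⟩
        have hxr := hle t _ _ ⟨C, hC, hxC, hσ.rep_mem hC⟩
        have hyr := hle t _ _ ⟨D, hD, hyD, hσ.rep_mem hD⟩
        exact (hπs t).sameBlock_trans ((hπs t).sameBlock_trans hxr.symm (hxy t)) hyr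
      exact ⟨C, hC, hxC, hσ.rep_injOn hC hD hCD ▸ hyD⟩
    · intro hxy
      exact ⟨⟨hσ.mem_of_sameBlock hxy, hσ.mem_of_sameBlock hxy.symm⟩, fun t => hle t x y hxy⟩

lemma card_filter_meetAll_eq (hG : IsSymm G) (hσ : IsZeroFreePartition G σ) {r : ℕ}
    (hr : r ≠ 0) :
    ((Fintype.piFinset fun _ : Fin r => zeroFreePartitions G).filter (meetAll G · = σ)).card
      = (minIntTuples (reps σ) r).card := by
  have hrefines {πs : Fin r → Finset (Finset ℤ)} (hπs : ∀ t, IsZeroFreePartition G (πs t))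
      (heq : meetAll G πs = σ) t : Refines σ (πs t) := fun x y hxy =>
    (sameBlock_meetAll.1 (heq ▸ hxy)).2 t
  have hmem {πs : Fin r → Finset (Finset ℤ)} : πs ∈ (Fintype.piFinset fun _ =>
      zeroFreePartitions G).filter (meetAll G · = σ) ↔
        (∀ t, IsZeroFreePartition G (πs t)) ∧ meetAll G πs = σ := by
    simp [mem_zeroFreePartitions]
  refine card_bij' (fun πs _ t => restrict σ (πs t)) (fun τs _ t => lift σ (τs t)) ?_ ?_ ?_ ?_
  · intro πs h
    obtain ⟨hπs, heq⟩ := hmem.1 h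
    rw [mem_minIntTuples_iff (hσ.isSymm_reps hG) hr]
    have hle := hrefines hπs heq
    exact ⟨fun t => hσ.isZeroFreePartition_restrict hG (hπs t) (hle t),
      (hσ.meetAll_eq_iff hr hπs hle).1 heq⟩
  · intro τs hτs
    rw [mem_minIntTuples_iff (hσ.isSymm_reps hG) hr] at hτs
    have hπs t := hσ.isZeroFreePartition_lift (hτs.1 t)
    refine hmem.2 ⟨hπs, (hσ.meetAll_eq_iff hr hπs fun t => (hτs.1 t).refines_lift).2 ?_⟩
    simpa only [hσ.restrict_lift (hτs.1 _)] using hτs.2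
  · intro πs h
    obtain ⟨hπs, heq⟩ := hmem.1 h
    funext t
    exact hσ.lift_restrict (hπs t) (hrefines hπs heq t)
  · intro τs hτs
    funext t
    exact hσ.restrict_lift ((mem_minIntTuples.1 hτs).1 t)

lemma two_mul_card_div_two (hG : IsSymm G) (hσ : IsZeroFreePartition G σ) :
    2 * (σ.card / 2) = σ.card := by
  have := (hσ.isSymm_reps hG).card_eq
  rw [hσ.card_reps] at this
  omega

lemma card_le (hσ : IsZeroFreePartition G σ) : σ.card ≤ G.card :=
  hσ.card_reps ▸ card_le_card hσ.reps_subset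

end IsZeroFreePartition

noncomputable def partitionsWithPairs (G : Finset ℤ) (k : ℕ) : Finset (Finset (Finset ℤ)) :=
  (zeroFreePartitions G).filter (·.card = 2 * k)

theorem card_zeroFreePartitions_pow (hG : IsSymm G) {r : ℕ} (hr : r ≠ 0) :
    (zeroFreePartitions G).card ^ r = ∑ k ∈ range (G.card / 2 + 1),
      (partitionsWithPairs G k).card * (minIntTuples (pmSet k) r).card := by
  have hmaps : ∀ πs ∈ Fintype.piFinset fun _ : Fin r => zeroFreePartitions G,
      meetAll G πs ∈ zeroFreePartitions G := fun πs hπs => mem_zeroFreePartitions.2 <|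
    isZeroFreePartition_meetAll hr fun t => mem_zeroFreePartitions.1 (Fintype.mem_piFinset.1 hπs t)
  have hfibre : ∀ σ ∈ zeroFreePartitions G,
      ((Fintype.piFinset fun _ : Fin r => zeroFreePartitions G).filter (meetAll G · = σ)).card
        = (minIntTuples (pmSet (σ.card / 2)) r).card := by
    intro σ hσ
    rw [mem_zeroFreePartitions] at hσ
    rw [hσ.card_filter_meetAll_eq hG hr]
    obtain ⟨f, g, e⟩ := exists_isOddBij (hσ.isSymm_reps hG) (isSymm_pmSet _)
      (by rw [hσ.card_reps, card_pmSet, hσ.two_mul_card_div_two hG])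
    exact e.card_minIntTuples_eq (hσ.isSymm_reps hG) (isSymm_pmSet _) hr
  have hhalf : ∀ σ ∈ zeroFreePartitions G, σ.card / 2 ∈ range (G.card / 2 + 1) := by
    intro σ hσ
    have := (mem_zeroFreePartitions.1 hσ).card_le
    rw [mem_range]
    omega
  calc (zeroFreePartitions G).card ^ r
      = (Fintype.piFinset fun _ : Fin r => zeroFreePartitions G).card := by simp
    _ = ∑ σ ∈ zeroFreePartitions G, (minIntTuples (pmSet (σ.card / 2)) r).card := by
      rw [card_eq_sum_card_fiberwise hmaps]
      exact sum_congr rfl hfibre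
    _ = _ := by
      rw [← sum_fiberwise_of_maps_to' hhalf (fun k => (minIntTuples (pmSet k) r).card)]
      refine sum_congr rfl fun k _ => ?_
      rw [sum_const, smul_eq_mul, partitionsWithPairs]
      congr 2
      refine filter_congr fun σ hσ => ?_
      have := (mem_zeroFreePartitions.1 hσ).two_mul_card_div_two hG
      omega

lemma IsZeroFreePartition.union (hσ : IsZeroFreePartition G σ) (hρ : IsZeroFreePartition H ρ)
    (hGH : Disjoint G H) : IsZeroFreePartition (G ∪ H) (σ ∪ ρ) where
  subset B hB := by
    rcases mem_union.1 hB with hB | hB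
    exacts [(hσ.subset B hB).trans subset_union_left, (hρ.subset B hB).trans subset_union_right]
  nonempty B hB := by
    rcases mem_union.1 hB with hB | hB
    exacts [hσ.nonempty B hB, hρ.nonempty B hB]
  cover x hx := by
    rcases mem_union.1 hx with hx | hx
    · obtain ⟨B, hB, hxB⟩ := hσ.cover x hx
      exact ⟨B, mem_union_left _ hB, hxB⟩
    · obtain ⟨B, hB, hxB⟩ := hρ.cover x hx
      exact ⟨B, mem_union_right _ hB, hxB⟩
  eq_of_mem B hB C hC x hxB hxC := by
    rcases mem_union.1 hB with hB | hB <;> rcases mem_union.1 hC with hC | hC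
    · exact hσ.eq_of_mem B hB C hC x hxB hxC
    · exact absurd (hρ.subset C hC hxC) (disjoint_left.1 hGH (hσ.subset B hB hxB))
    · exact absurd (hρ.subset B hB hxB) (disjoint_left.1 hGH (hσ.subset C hC hxC))
    · exact hρ.eq_of_mem B hB C hC x hxB hxC
  negBlock_mem B hB := by
    rcases mem_union.1 hB with hB | hB
    exacts [mem_union_left _ (hσ.negBlock_mem B hB), mem_union_right _ (hρ.negBlock_mem B hB)]
  neg_notMem B hB := by
    rcases mem_union.1 hB with hB | hB
    exacts [hσ.neg_notMem B hB, hρ.neg_notMem B hB]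

lemma IsZeroFreePartition.sdiff (hσ : IsZeroFreePartition G σ) (hρ : IsZeroFreePartition H ρ)
    (hρσ : ρ ⊆ σ) : IsZeroFreePartition (G \ H) (σ \ ρ) where
  subset B hB x hx := by
    rw [mem_sdiff] at hB ⊢
    refine ⟨hσ.subset B hB.1 hx, fun hxH => hB.2 ?_⟩
    obtain ⟨C, hC, hxC⟩ := hρ.cover x hxH
    rwa [hσ.eq_of_mem B hB.1 C (hρσ hC) x hx hxC]
  nonempty B hB := hσ.nonempty B (mem_sdiff.1 hB).1
  cover x hx := by
    rw [mem_sdiff] at hx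
    obtain ⟨B, hB, hxB⟩ := hσ.cover x hx.1
    exact ⟨B, mem_sdiff.2 ⟨hB, fun hBρ => hx.2 (hρ.subset B hBρ hxB)⟩, hxB⟩
  eq_of_mem B hB C hC := hσ.eq_of_mem B (mem_sdiff.1 hB).1 C (mem_sdiff.1 hC).1
  negBlock_mem B hB := by
    rw [mem_sdiff] at hB ⊢
    exact ⟨hσ.negBlock_mem B hB.1, fun h => hB.2 (negBlock_negBlock B ▸ hρ.negBlock_mem _ h)⟩
  neg_notMem B hB := hσ.neg_notMem B (mem_sdiff.1 hB).1

lemma isSymm_pair (ha0 : a ≠ 0) : IsSymm {a, -a} :=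
  ⟨by simp [ha0, ha0.symm], by simp +contextual [or_comm]⟩

lemma disjoint_pair (hG : IsSymm G) (ha : a ∉ G) : Disjoint {a, -a} G := by
  simp [ha, hG.neg_mem_iff]

lemma singletons_pair_subset_iff (hσ : IsZeroFreePartition G σ) :
    singletons {a, -a} ⊆ σ ↔ {a} ∈ σ := by
  refine ⟨fun h => h (by simp), fun h => ?_⟩
  have := hσ.negBlock_mem _ h
  rw [negBlock_singleton] at this
  simp [singletons, insert_subset_iff, h, this]

/-- Zero-free partitions of `{a, -a} ∪ G` with the singleton block `{a}` and `k + 1` block pairs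
are those of `G` with `k` block pairs, together with `{a}` and `{-a}`. -/
lemma card_partitionsWithPairs_filter_singleton_mem (hG : IsSymm G) (ha : a ∉ G) (ha0 : a ≠ 0)
    (k : ℕ) : ((partitionsWithPairs ({a, -a} ∪ G) (k + 1)).filter ({a} ∈ ·)).card
      = (partitionsWithPairs G k).card := by
  have hP := isZeroFreePartition_singletons (isSymm_pair ha0)
  have hcardP : (singletons {a, -a}).card = 2 := by
    rw [card_singletons, card_pair (by omega)]
  have hdisj {σ'} (hσ' : IsZeroFreePartition G σ') : Disjoint (singletons {a, -a}) σ' := by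
    refine disjoint_left.2 fun B hB hB' => ?_
    obtain ⟨x, hx, rfl⟩ := mem_singletons.1 hB
    exact disjoint_left.1 (disjoint_pair hG ha) hx (hσ'.subset _ hB' (mem_singleton_self x))
  have hground : ({a, -a} ∪ G) \ {a, -a} = G := union_sdiff_cancel_left (disjoint_pair hG ha)
  refine card_bij' (fun σ _ => σ \ singletons {a, -a}) (fun σ' _ => singletons {a, -a} ∪ σ')
    ?_ ?_ ?_ ?_
  all_goals simp only [partitionsWithPairs, mem_filter, mem_zeroFreePartitions]
  · rintro σ ⟨⟨hσ, hcard⟩, hs⟩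
    have hsub := (singletons_pair_subset_iff hσ).2 hs
    refine ⟨hground ▸ hσ.sdiff hP hsub, ?_⟩
    rw [card_sdiff_of_subset hsub, hcard, hcardP]
    omega
  · rintro σ' ⟨hσ', hcard⟩
    refine ⟨⟨hP.union hσ' (disjoint_pair hG ha), ?_⟩, mem_union_left _ (by simp)⟩
    rw [card_union_of_disjoint (hdisj hσ'), hcard, hcardP]
    ring
  · rintro σ ⟨⟨hσ, -⟩, hs⟩
    exact union_sdiff_of_subset ((singletons_pair_subset_iff hσ).2 hs)
  · rintro σ' ⟨hσ', -⟩
    exact union_sdiff_cancel_left (hdisj hσ')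

noncomputable def blockOf (σ : Finset (Finset ℤ)) (x : ℤ) : Finset ℤ :=
  (σ.filter (x ∈ ·)).biUnion id

lemma IsZeroFreePartition.blockOf_eq (hσ : IsZeroFreePartition G σ) {B : Finset ℤ} (hB : B ∈ σ)
    {x : ℤ} (hx : x ∈ B) : blockOf σ x = B := by
  have : σ.filter (x ∈ ·) = {B} := by
    ext C
    simp only [mem_filter, mem_singleton]
    exact ⟨fun h => hσ.eq_of_mem C h.1 B hB x h.2 hx, by rintro rfl; exact ⟨hB, hx⟩⟩
  simp [blockOf, this]

def insertAt (a : ℤ) (B C : Finset ℤ) : Finset ℤ :=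
  if C = B then insert a C else if C = negBlock B then insert (-a) C else C

lemma subset_insertAt (a : ℤ) (B C : Finset ℤ) : C ⊆ insertAt a B C := by
  unfold insertAt
  split_ifs <;> simp [subset_insert]

lemma insertAt_inter (hG : IsSymm G) (ha : a ∉ G) {B C : Finset ℤ} (hC : C ⊆ G) :
    insertAt a B C ∩ G = C := by
  have ha' : -a ∉ G := by rwa [hG.neg_mem_iff]
  unfold insertAt
  split_ifs <;> simp [insert_inter_of_notMem, ha, ha', inter_eq_left.2 hC]

lemma negBlock_insertAt {B C : Finset ℤ} (hB : negBlock B ≠ B) :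
    negBlock (insertAt a B C) = insertAt a B (negBlock C) := by
  by_cases h1 : C = B
  · subst h1
    simp [insertAt, negBlock_insert, hB]
  by_cases h2 : C = negBlock B
  · subst h2
    simp [insertAt, negBlock_insert, hB]
  have h1' : negBlock C ≠ negBlock B := fun h => h1 (negBlock_injective h)
  have h2' : negBlock C ≠ B := fun h => h2 (by rw [← h, negBlock_negBlock])
  simp [insertAt, h1, h2, h1', h2']

lemma insert_inter_eq {C : Finset ℤ} {x : ℤ} (hC : C ⊆ {x, -x} ∪ G) (hx : x ∈ C)
    (hnx : -x ∉ C) : insert x (C ∩ G) = C := by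
  ext y
  simp only [mem_insert, mem_inter]
  constructor
  · rintro (rfl | ⟨hy, -⟩) <;> assumption
  · intro hy
    rcases mem_union.1 (hC hy) with h | h
    · rcases mem_insert.1 h with rfl | h
      · exact Or.inl rfl
      · exact absurd (mem_singleton.1 h ▸ hy) hnx
    · exact Or.inr ⟨hy, h⟩

lemma inter_eq_self {C : Finset ℤ} (hC : C ⊆ {a, -a} ∪ G) (ha : a ∉ C) (hna : -a ∉ C) :
    C ∩ G = C := by
  refine inter_eq_left.2 fun y hy => ?_
  rcases mem_union.1 (hC hy) with h | h
  · rcases mem_insert.1 h with rfl | h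
    · exact absurd hy ha
    · exact absurd (mem_singleton.1 h ▸ hy) hna
  · exact h

namespace IsZeroFreePartition

lemma inter_nonempty (hσ : IsZeroFreePartition ({a, -a} ∪ G) σ) (hs : {a} ∉ σ)
    {B : Finset ℤ} (hB : B ∈ σ) : (B ∩ G).Nonempty := by
  by_contra hempty
  obtain ⟨x, hx⟩ := hσ.nonempty B hB
  have hpm : ∀ y ∈ B, y = a ∨ y = -a := fun y hy => by
    have : y ∉ G := fun hyG => hempty ⟨y, mem_inter.2 ⟨hy, hyG⟩⟩
    simpa [this] using hσ.subset B hB hy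
  have hBx : B = {x} := by
    refine eq_singleton_iff_unique_mem.2 ⟨hx, fun y hy => ?_⟩
    have hyx : y ≠ -x := fun h => hσ.neg_notMem B hB x hx (h ▸ hy)
    rcases hpm x hx with rfl | rfl <;> rcases hpm y hy with rfl | rfl <;> simp_all
  rcases hpm x hx with rfl | rfl
  · exact hs (hBx ▸ hB)
  · exact hs (by simpa [hBx] using hσ.negBlock_mem B hB)

lemma image_inter (hG : IsSymm G) (hσ : IsZeroFreePartition ({a, -a} ∪ G) σ) (hs : {a} ∉ σ) :
    IsZeroFreePartition G (σ.image (· ∩ G)) where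
  subset D hD := by
    obtain ⟨B, -, rfl⟩ := mem_image.1 hD
    exact inter_subset_right
  nonempty D hD := by
    obtain ⟨B, hB, rfl⟩ := mem_image.1 hD
    exact hσ.inter_nonempty hs hB
  cover x hx := by
    obtain ⟨B, hB, hxB⟩ := hσ.cover x (mem_union_right _ hx)
    exact ⟨B ∩ G, mem_image_of_mem _ hB, mem_inter.2 ⟨hxB, hx⟩⟩
  eq_of_mem D hD E hE x hxD hxE := by
    obtain ⟨B, hB, rfl⟩ := mem_image.1 hD
    obtain ⟨C, hC, rfl⟩ := mem_image.1 hE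
    rw [hσ.eq_of_mem B hB C hC x (mem_inter.1 hxD).1 (mem_inter.1 hxE).1]
  negBlock_mem D hD := by
    obtain ⟨B, hB, rfl⟩ := mem_image.1 hD
    rw [negBlock_inter, hG.negBlock_eq]
    exact mem_image_of_mem _ (hσ.negBlock_mem B hB)
  neg_notMem D hD x hx hnx := by
    obtain ⟨B, hB, rfl⟩ := mem_image.1 hD
    exact hσ.neg_notMem B hB x (mem_inter.1 hx).1 (mem_inter.1 hnx).1

lemma inter_injOn (hσ : IsZeroFreePartition ({a, -a} ∪ G) σ) (hs : {a} ∉ σ) {B C : Finset ℤ}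
    (hB : B ∈ σ) (hC : C ∈ σ) (h : B ∩ G = C ∩ G) : B = C := by
  obtain ⟨x, hx⟩ := hσ.inter_nonempty hs hB
  exact hσ.eq_of_mem B hB C hC x (mem_inter.1 hx).1 (mem_inter.1 (h ▸ hx)).1

end IsZeroFreePartition

lemma insertAt_subset (B C : Finset ℤ) : insertAt a B C ⊆ {a, -a} ∪ C := by
  unfold insertAt
  split_ifs <;> intro x <;> simp +contextual [or_imp]

lemma eq_of_self_mem_insertAt (ha : a ∉ G) (ha0 : a ≠ 0) {C : Finset ℤ} (hC : C ⊆ G)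
    (h : a ∈ insertAt a B C) : C = B := by
  unfold insertAt at h
  split_ifs at h with h1 h2
  · exact h1
  · rcases mem_insert.1 h with h | h
    · omega
    · exact absurd (hC h) ha
  · exact absurd (hC h) ha

lemma insertAt_self (a : ℤ) (B : Finset ℤ) : insertAt a B B = insert a B := if_pos rfl

lemma insertAt_negBlock (hBB : negBlock B ≠ B) :
    insertAt a B (negBlock B) = insert (-a) (negBlock B) := by
  rw [insertAt, if_neg hBB, if_pos rfl]

lemma insertAt_of_ne {C : Finset ℤ} (h₁ : C ≠ B) (h₂ : C ≠ negBlock B) : insertAt a B C = C := by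
  rw [insertAt, if_neg h₁, if_neg h₂]

lemma IsZeroFreePartition.eq_of_mem_insertAt (hG : IsSymm G) (ha : a ∉ G) (ha0 : a ≠ 0)
    (hσ' : IsZeroFreePartition G σ') (hB : B ∈ σ') {C D : Finset ℤ} (hC : C ∈ σ') (hD : D ∈ σ')
    {x : ℤ} (hxC : x ∈ insertAt a B C) (hxD : x ∈ insertAt a B D) : C = D := by
  have hBB : negBlock B ≠ B := hσ'.negBlock_ne hB
  by_cases hx : x ∈ G
  · have hxC' : x ∈ insertAt a B C ∩ G := mem_inter.2 ⟨hxC, hx⟩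
    have hxD' : x ∈ insertAt a B D ∩ G := mem_inter.2 ⟨hxD, hx⟩
    rw [insertAt_inter hG ha (hσ'.subset C hC)] at hxC'
    rw [insertAt_inter hG ha (hσ'.subset D hD)] at hxD'
    exact hσ'.eq_of_mem C hC D hD x hxC' hxD'
  have hpm : x = a ∨ x = -a := by
    have := insertAt_subset B C hxC
    simp only [mem_union, mem_insert, mem_singleton] at this
    exact this.resolve_right fun h => hx (hσ'.subset C hC h)
  have hneg {E} (hE : E ∈ σ') (hxE : -a ∈ insertAt a B E) : E = negBlock B := by
    rw [← negBlock_negBlock (insertAt a B E), mem_negBlock, neg_neg,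
      negBlock_insertAt hBB] at hxE
    rw [← eq_of_self_mem_insertAt ha ha0 (hσ'.subset _ (hσ'.negBlock_mem E hE)) hxE,
      negBlock_negBlock]
  rcases hpm with rfl | rfl
  · rw [eq_of_self_mem_insertAt ha ha0 (hσ'.subset C hC) hxC,
      eq_of_self_mem_insertAt ha ha0 (hσ'.subset D hD) hxD]
  · rw [hneg hC hxC, hneg hD hxD]

lemma IsZeroFreePartition.image_insertAt (hG : IsSymm G) (ha : a ∉ G) (ha0 : a ≠ 0)
    (hσ' : IsZeroFreePartition G σ') (hB : B ∈ σ') :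
    IsZeroFreePartition ({a, -a} ∪ G) (σ'.image (insertAt a B)) := by
  have hBB : negBlock B ≠ B := hσ'.negBlock_ne hB
  have heq {C D} (hC : C ∈ σ') (hD : D ∈ σ') {x} (hxC : x ∈ insertAt a B C)
      (hxD : x ∈ insertAt a B D) : C = D := hσ'.eq_of_mem_insertAt hG ha ha0 hB hC hD hxC hxD
  exact {
    subset := by
      simp only [mem_image, forall_exists_index, and_imp, forall_apply_eq_imp_iff₂]
      exact fun C hC => (insertAt_subset B C).trans (union_subset_union_right (hσ'.subset C hC))
    nonempty := by
      simp only [mem_image, forall_exists_index, and_imp, forall_apply_eq_imp_iff₂]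
      exact fun C hC => (hσ'.nonempty C hC).mono (subset_insertAt a B C)
    cover := by
      intro x hx
      simp only [mem_union, mem_insert, mem_singleton] at hx
      rcases hx with (rfl | rfl) | hx
      · exact ⟨_, mem_image_of_mem _ hB, insertAt_self x B ▸ mem_insert_self x B⟩
      · exact ⟨_, mem_image_of_mem _ (hσ'.negBlock_mem B hB),
          insertAt_negBlock hBB ▸ mem_insert_self _ _⟩
      · obtain ⟨C, hC, hxC⟩ := hσ'.cover x hx
        exact ⟨_, mem_image_of_mem _ hC, subset_insertAt a B C hxC⟩
    eq_of_mem := by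
      simp only [mem_image, forall_exists_index, and_imp, forall_apply_eq_imp_iff₂]
      intro C hC D hD x hxC hxD
      rw [heq hC hD hxC hxD]
    negBlock_mem := by
      simp only [mem_image, forall_exists_index, and_imp, forall_apply_eq_imp_iff₂]
      exact fun C hC => ⟨negBlock C, hσ'.negBlock_mem C hC, (negBlock_insertAt hBB).symm⟩
    neg_notMem := by
      simp only [mem_image, forall_exists_index, and_imp, forall_apply_eq_imp_iff₂]
      intro C hC x hx hnx
      have hx' : x ∈ insertAt a B (negBlock C) := by rwa [← negBlock_insertAt hBB, mem_negBlock]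
      exact hσ'.negBlock_ne hC (heq hC (hσ'.negBlock_mem C hC) hx hx').symm }

lemma IsZeroFreePartition.image_insertAt_image_inter (hG : IsSymm G) (ha : a ∉ G)
    (hσ' : IsZeroFreePartition G σ') : (σ'.image (insertAt a B)).image (· ∩ G) = σ' := by
  rw [Finset.image_image]
  exact (image_congr fun C hC => insertAt_inter hG ha (hσ'.subset C hC)).trans image_id

lemma IsZeroFreePartition.card_image_insertAt (hG : IsSymm G) (ha : a ∉ G)
    (hσ' : IsZeroFreePartition G σ') : (σ'.image (insertAt a B)).card = σ'.card :=
  card_image_of_injOn fun C hC D hD h => by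
    rw [← insertAt_inter hG ha (hσ'.subset C hC), ← insertAt_inter hG ha (hσ'.subset D hD)]
    exact congrArg (· ∩ G) h

lemma IsZeroFreePartition.singleton_notMem_image_insertAt (hG : IsSymm G) (ha : a ∉ G)
    (hσ' : IsZeroFreePartition G σ') : {a} ∉ σ'.image (insertAt a B) := by
  intro h
  obtain ⟨C, hC, hCa⟩ := mem_image.1 h
  have := insertAt_inter (B := B) hG ha (hσ'.subset C hC)
  rw [hCa, singleton_inter_of_notMem ha] at this
  exact (hσ'.nonempty C hC).ne_empty this.symm

lemma IsZeroFreePartition.image_inter_image_insertAt (hG : IsSymm G)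
    (hσ : IsZeroFreePartition ({a, -a} ∪ G) σ) (hs : {a} ∉ σ) :
    (σ.image (· ∩ G)).image (insertAt a (blockOf σ a ∩ G)) = σ := by
  obtain ⟨Ba, hBa, haBa⟩ := hσ.cover a (by simp)
  have hnaBa : -a ∉ Ba := hσ.neg_notMem Ba hBa a haBa
  rw [hσ.blockOf_eq hBa haBa, Finset.image_image]
  refine (image_congr fun C hC => ?_).trans image_id
  simp only [Function.comp_apply, id_eq]
  have hneg : negBlock (Ba ∩ G) = negBlock Ba ∩ G := by rw [negBlock_inter, hG.negBlock_eq]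
  by_cases h₁ : C = Ba
  · subst h₁
    rw [insertAt_self]
    exact insert_inter_eq (hσ.subset C hC) haBa hnaBa
  by_cases h₂ : C = negBlock Ba
  · subst h₂
    have hBB := (hσ.image_inter hG hs).negBlock_ne (mem_image_of_mem _ hBa)
    rw [← hneg, insertAt_negBlock hBB, hneg]
    exact insert_inter_eq (by simpa [pair_comm] using hσ.subset _ hC) (by simpa)
      (by simpa using hnaBa)
  have haC : a ∉ C := fun h => h₁ (hσ.eq_of_mem C hC Ba hBa a h haBa)
  have hnaC : -a ∉ C := fun h =>
    h₂ (hσ.eq_of_mem C hC _ (hσ.negBlock_mem Ba hBa) (-a) h (by simpa))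
  rw [insertAt_of_ne, inter_eq_self (hσ.subset C hC) haC hnaC]
  · exact fun h => h₁ (hσ.inter_injOn hs hC hBa h)
  · exact fun h => h₂ (hσ.inter_injOn hs hC (hσ.negBlock_mem Ba hBa) (h.trans hneg))

/-- Zero-free partitions of `{a, -a} ∪ G` without the singleton block `{a}` arise from those
of `G` by adding `a` to one of their blocks `B` (and `-a` to `-B`). -/
lemma card_partitionsWithPairs_filter_singleton_notMem (hG : IsSymm G) (ha : a ∉ G)
    (ha0 : a ≠ 0) (k : ℕ) :
    ((partitionsWithPairs ({a, -a} ∪ G) (k + 1)).filter ({a} ∉ ·)).card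
      = 2 * (k + 1) * (partitionsWithPairs G (k + 1)).card := by
  have hsigma : ((partitionsWithPairs G (k + 1)).sigma id).card
      = 2 * (k + 1) * (partitionsWithPairs G (k + 1)).card := by
    rw [card_sigma, mul_comm]
    exact sum_const_nat fun σ' hσ' => (mem_filter.1 hσ').2
  rw [← hsigma]
  refine card_bij' (fun σ _ => ⟨σ.image (· ∩ G), blockOf σ a ∩ G⟩)
    (fun p _ => p.1.image (insertAt a p.2)) ?_ ?_ ?_ ?_
  all_goals simp only [partitionsWithPairs, mem_filter, mem_sigma, mem_zeroFreePartitions, id]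
  · rintro σ ⟨⟨hσ, hcard⟩, hs⟩
    obtain ⟨Ba, hBa, haBa⟩ := hσ.cover a (by simp)
    refine ⟨⟨hσ.image_inter hG hs, ?_⟩, ?_⟩
    · rw [card_image_of_injOn fun B hB C hC h => hσ.inter_injOn hs hB hC h, hcard]
    · rw [hσ.blockOf_eq hBa haBa]
      exact mem_image_of_mem _ hBa
  · rintro ⟨σ', B⟩ ⟨⟨hσ', hcard⟩, hB⟩
    exact ⟨⟨hσ'.image_insertAt hG ha ha0 hB, (hσ'.card_image_insertAt hG ha).trans hcard⟩,
      hσ'.singleton_notMem_image_insertAt hG ha⟩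
  · rintro σ ⟨⟨hσ, -⟩, hs⟩
    exact hσ.image_inter_image_insertAt hG hs
  · rintro ⟨σ', B⟩ ⟨⟨hσ', -⟩, hB⟩
    have hup := hσ'.image_insertAt hG ha ha0 hB
    rw [hup.blockOf_eq (mem_image_of_mem _ hB) (insertAt_self a B ▸ mem_insert_self a B),
      insertAt_inter hG ha (hσ'.subset B hB), hσ'.image_insertAt_image_inter hG ha]

theorem card_partitionsWithPairs_succ (hG : IsSymm G) (ha : a ∉ G) (ha0 : a ≠ 0) (k : ℕ) :
    (partitionsWithPairs ({a, -a} ∪ G) (k + 1)).card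
      = (partitionsWithPairs G k).card + 2 * (k + 1) * (partitionsWithPairs G (k + 1)).card := by
  rw [← card_filter_add_card_filter_not ({a} ∈ ·),
    card_partitionsWithPairs_filter_singleton_mem hG ha ha0,
    card_partitionsWithPairs_filter_singleton_notMem hG ha ha0]

lemma pmSet_succ (n : ℕ) : pmSet (n + 1) = {((n + 1 : ℕ) : ℤ), -((n + 1 : ℕ) : ℤ)} ∪ pmSet n := by
  ext x; simp only [mem_pmSet, mem_union, mem_insert, mem_singleton]; omega

lemma pmSet_zero : pmSet 0 = ∅ := by
  ext x; simp only [mem_pmSet, notMem_empty, iff_false]; omega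

lemma zeroFreePartitions_empty : zeroFreePartitions ∅ = {∅} := by
  ext π
  rw [mem_zeroFreePartitions, mem_singleton]
  constructor
  · intro h
    refine eq_empty_of_forall_notMem fun B hB => ?_
    obtain ⟨x, hx⟩ := h.nonempty B hB
    exact notMem_empty x (h.subset B hB hx)
  · rintro rfl
    constructor <;> simp

noncomputable def pairCount (n k : ℕ) : ℕ := (partitionsWithPairs (pmSet n) k).card

lemma pairCount_succ_succ (n k : ℕ) :
    pairCount (n + 1) (k + 1) = pairCount n k + 2 * (k + 1) * pairCount n (k + 1) := by
  rw [pairCount, pmSet_succ]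
  exact card_partitionsWithPairs_succ (isSymm_pmSet n) (by simp) (by omega) k

lemma pairCount_zero (k : ℕ) : pairCount 0 k = if k = 0 then 1 else 0 := by
  rw [pairCount, partitionsWithPairs, pmSet_zero, zeroFreePartitions_empty, filter_singleton]
  split_ifs <;> simp_all [eq_comm]

lemma pairCount_succ_zero (n : ℕ) : pairCount (n + 1) 0 = 0 := by
  refine card_eq_zero.2 (filter_eq_empty_iff.2 fun σ hσ hcard => ?_)
  obtain ⟨B, hB, -⟩ := (mem_zeroFreePartitions.1 hσ).cover 1 (by simp; omega)
  simp_all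

lemma pairCount_eq_zero_of_lt {n k : ℕ} (h : n < k) : pairCount n k = 0 := by
  induction n generalizing k with
  | zero => simp [pairCount_zero, h.ne']
  | succ n ih =>
    obtain ⟨k, rfl⟩ := Nat.exists_eq_add_of_lt h
    rw [show n + 1 + k + 1 = (n + k + 1) + 1 by ring, pairCount_succ_succ, ih (by omega),
      ih (by omega), mul_zero, add_zero]

section Polynomials

open Polynomial

lemma descPochhammer_int_eq_prod (n : ℕ) :
    descPochhammer ℤ n = ∏ i ∈ range n, (X - C (i : ℤ)) := by
  induction n with
  | zero => simp
  | succ n ih => rw [descPochhammer_succ_right, ih, prod_range_succ, ← map_natCast C]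

lemma stirling1_eq_coeff (n j : ℕ) : stirling1 n j = (descPochhammer ℤ n).coeff j := by
  rw [stirling1, descPochhammer_int_eq_prod]

lemma stirling1_succ_zero (n : ℕ) : stirling1 (n + 1) 0 = 0 := by
  rw [stirling1_eq_coeff, coeff_zero_eq_eval_zero, descPochhammer_eval_zero, if_neg n.succ_ne_zero]

/-- `X (X - 2) ⋯ (X - 2k + 2)`. -/
noncomputable def descPochhammerTwo (k : ℕ) : ℤ[X] := (descPochhammer ℤ k).scaleRoots 2

lemma descPochhammerTwo_zero : descPochhammerTwo 0 = 1 := by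
  simp [descPochhammerTwo]

lemma descPochhammerTwo_succ (k : ℕ) :
    descPochhammerTwo (k + 1) = descPochhammerTwo k * (X - C (2 * k : ℤ)) := by
  rw [descPochhammerTwo, descPochhammer_succ_right, mul_scaleRoots_of_noZeroDivisors,
    ← map_natCast C, X_sub_C_scaleRoots, mul_comm (k : ℤ), descPochhammerTwo]

lemma coeff_descPochhammerTwo (k j : ℕ) :
    (descPochhammerTwo k).coeff j = stirling1 k j * 2 ^ (k - j) := by
  rw [descPochhammerTwo, coeff_scaleRoots, descPochhammer_natDegree, stirling1_eq_coeff]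

lemma X_mul_descPochhammerTwo (k : ℕ) :
    X * descPochhammerTwo k = descPochhammerTwo (k + 1) + C (2 * k : ℤ) * descPochhammerTwo k := by
  rw [descPochhammerTwo_succ]
  ring

lemma sum_range_succ_shift {M : Type*} [AddCommMonoid M] (f : ℕ → M) {n : ℕ} (h₀ : f 0 = 0)
    (hn : f (n + 1) = 0) : ∑ k ∈ range (n + 1), f (k + 1) = ∑ k ∈ range (n + 1), f k := by
  have h₁ := sum_range_succ' f (n + 1)
  rw [sum_range_succ, hn, h₀, add_zero, add_zero] at h₁
  exact h₁.symm

theorem sum_pairCount_mul_descPochhammerTwo (n : ℕ) :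
    ∑ k ∈ range (n + 1), C (pairCount n k : ℤ) * descPochhammerTwo k = X ^ n := by
  induction n with
  | zero => simp [pairCount_zero, descPochhammerTwo_zero]
  | succ n ih =>
    let f : ℕ → ℤ[X] := fun k => C ((2 * k * pairCount n k : ℕ) : ℤ) * descPochhammerTwo k
    have hshift : ∑ k ∈ range (n + 1), f (k + 1) = ∑ k ∈ range (n + 1), f k :=
      sum_range_succ_shift f (by simp [f]) (by simp [f, pairCount_eq_zero_of_lt n.lt_succ_self])
    calc ∑ k ∈ range (n + 1 + 1), C (pairCount (n + 1) k : ℤ) * descPochhammerTwo k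
        = ∑ k ∈ range (n + 1),
            (C (pairCount n k : ℤ) * descPochhammerTwo (k + 1) + f (k + 1)) := by
          rw [sum_range_succ', pairCount_succ_zero, Nat.cast_zero, map_zero, zero_mul, add_zero]
          refine sum_congr rfl fun k _ => ?_
          rw [pairCount_succ_succ, Nat.cast_add, map_add, add_mul]
      _ = X * ∑ k ∈ range (n + 1), C (pairCount n k : ℤ) * descPochhammerTwo k := by
          rw [sum_add_distrib, hshift, ← sum_add_distrib, mul_sum]
          refine sum_congr rfl fun k _ => ?_
          rw [mul_left_comm, X_mul_descPochhammerTwo]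
          simp only [f, Nat.cast_mul, Nat.cast_ofNat, map_mul]
          ring
      _ = X ^ (n + 1) := by rw [ih, pow_succ']

lemma sum_pairCount_mul_stirling1 (n j : ℕ) :
    ∑ k ∈ range (n + 1), (pairCount n k : ℤ) * (stirling1 k j * 2 ^ (k - j))
      = if j = n then 1 else 0 := by
  have := congrArg (coeff · j) (sum_pairCount_mul_descPochhammerTwo n)
  simpa [finsetSum_coeff, coeff_C_mul, coeff_descPochhammerTwo, coeff_X_pow, eq_comm] using this

end Polynomials

section Inversion

open Matrix

lemma sum_fin_pairCount_mul {n : ℕ} (i : Fin (n + 1)) (g : ℕ → ℤ) :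
    ∑ k : Fin (n + 1), (pairCount i k : ℤ) * g k
      = ∑ k ∈ range (i + 1), (pairCount i k : ℤ) * g k := by
  rw [Fin.sum_univ_eq_sum_range (fun k => (pairCount i k : ℤ) * g k)]
  refine (sum_subset (range_subset_range.2 (by omega)) fun k _ hk => ?_).symm
  rw [pairCount_eq_zero_of_lt (by simpa using hk), Nat.cast_zero, zero_mul]

lemma stirling1_matrix_mul_pairCount_matrix (n : ℕ) :
    (of fun k j : Fin (n + 1) => stirling1 k j * 2 ^ ((k : ℕ) - j))
      * of (fun i k : Fin (n + 1) => (pairCount i k : ℤ)) = 1 := by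
  refine mul_eq_one_comm.1 (ext fun i j => ?_)
  rw [mul_apply, one_apply]
  simp only [of_apply]
  rw [sum_fin_pairCount_mul i fun k => stirling1 k j * 2 ^ (k - j), sum_pairCount_mul_stirling1]
  simp [Fin.val_inj, eq_comm]

theorem card_minIntTuples_pmSet_eq_sum_range (n : ℕ) {r : ℕ} (hr : r ≠ 0) :
    ((minIntTuples (pmSet n) r).card : ℤ) = ∑ j ∈ range (n + 1),
      stirling1 n j * 2 ^ (n - j) * ((zeroFreePartitions (pmSet j)).card : ℤ) ^ r := by
  set L : Fin (n + 1) → ℤ := fun k => (minIntTuples (pmSet k) r).card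
  have hpow : (of fun i k : Fin (n + 1) => (pairCount i k : ℤ)) *ᵥ L
      = fun j : Fin (n + 1) => ((zeroFreePartitions (pmSet j)).card : ℤ) ^ r := by
    funext j
    rw [mulVec, dotProduct]
    simp only [of_apply, L]
    rw [sum_fin_pairCount_mul j fun k => (minIntTuples (pmSet k) r).card, ← Nat.cast_pow,
      card_zeroFreePartitions_pow (isSymm_pmSet j) hr, card_pmSet,
      Nat.mul_div_cancel_left _ two_pos]
    push_cast
    rfl
  have hL := congrFun (congrArg (· *ᵥ L) (stirling1_matrix_mul_pairCount_matrix n)) (Fin.last n)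
  rw [one_mulVec, ← mulVec_mulVec, hpow] at hL
  change _ = ((minIntTuples (pmSet n) r).card : ℤ) at hL
  rw [← hL, mulVec, dotProduct]
  simp only [of_apply, Fin.val_last]
  exact Fin.sum_univ_eq_sum_range (fun j => stirling1 n j * 2 ^ (n - j) *
    ((zeroFreePartitions (pmSet j)).card : ℤ) ^ r) (n + 1)

theorem card_minIntTuples_pmSet {n r : ℕ} (hn : 1 ≤ n) (hr : r ≠ 0) :
    ((minIntTuples (pmSet n) r).card : ℤ) = ∑ j ∈ Icc 1 n,
      ((zeroFreePartitions (pmSet j)).card : ℤ) ^ r * 2 ^ (n - j) * stirling1 n j := by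
  obtain ⟨m, rfl⟩ := Nat.exists_eq_add_of_le' hn
  rw [card_minIntTuples_pmSet_eq_sum_range _ hr, range_eq_Ico, sum_eq_sum_Ico_succ_bot (by omega),
    zero_add, Ico_add_one_right_eq_Icc, stirling1_succ_zero, zero_mul, zero_mul, zero_add]
  exact sum_congr rfl fun j _ => by ring

end Inversion

lemma isBnPartition_and_noZeroBlock_iff {n : ℕ} :
    IsBnPartition n π ∧ NoZeroBlock π ↔ IsZeroFreePartition (pmSet n) π := by
  constructor
  · rintro ⟨⟨hne, hsub, hexu, hneg, -⟩, hnz⟩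
    have heq : ∀ B ∈ π, ∀ C ∈ π, ∀ x ∈ B, x ∈ C → B = C := fun B hB C hC x hxB hxC =>
      (hexu x (hsub B hB hxB)).unique ⟨hB, hxB⟩ ⟨hC, hxC⟩
    exact {
      subset := hsub
      nonempty := fun B hB => nonempty_iff_ne_empty.2 (hne B hB)
      cover := fun x hx => (hexu x hx).exists
      eq_of_mem := heq
      negBlock_mem := hneg
      neg_notMem := fun B hB x hx hnx => hnz B hB
        (heq _ (hneg B hB) B hB x (by rwa [mem_negBlock]) hx) }
  · intro h
    refine ⟨⟨fun B hB => nonempty_iff_ne_empty.1 (h.nonempty B hB), h.subset, fun x hx => ?_,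
      h.negBlock_mem, ?_⟩, fun B hB => h.negBlock_ne hB⟩
    · obtain ⟨B, hB, hxB⟩ := h.cover x hx
      exact ⟨B, ⟨hB, hxB⟩, fun C hC => h.eq_of_mem C hC.1 B hB x hC.2 hxB⟩
    · rw [filter_false_of_mem fun B hB => h.negBlock_ne hB, card_empty]
      exact zero_le_one

lemma ncard_isBnPartition_and_noZeroBlock (n : ℕ) :
    Set.ncard {π : Finset (Finset ℤ) | IsBnPartition n π ∧ NoZeroBlock π}
      = (zeroFreePartitions (pmSet n)).card := by
  rw [← Set.ncard_coe_finset]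
  congr 1
  ext π
  simp [isBnPartition_and_noZeroBlock_iff, mem_zeroFreePartitions]

lemma ncard_minIntFam (n r : ℕ) :
    Set.ncard {πs : Fin r → Finset (Finset ℤ) |
        (∀ t, IsBnPartition n (πs t) ∧ NoZeroBlock (πs t)) ∧ MinIntFam n πs}
      = (minIntTuples (pmSet n) r).card := by
  rw [← Set.ncard_coe_finset]
  congr 1
  ext πs
  simp only [Set.mem_ofPred_eq, isBnPartition_and_noZeroBlock_iff, mem_coe, mem_minIntTuples]
  rfl

end TypeB

/-- Type-B analogue of Wilf's formula: `N_{n,r}^D = Σ_{j=1}^n Nⱼʳ 2^{n-j} s(n,j)`. -/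
theorem stmt13 (n r : ℕ) (hn : 1 ≤ n) (hr : 2 ≤ r) :
    (Set.ncard {πs : Fin r → Finset (Finset ℤ) |
        (∀ t, IsBnPartition n (πs t) ∧ NoZeroBlock (πs t)) ∧ MinIntFam n πs} : ℤ)
      = ∑ j ∈ Finset.Icc 1 n,
          (Set.ncard {π : Finset (Finset ℤ) | IsBnPartition j π ∧ NoZeroBlock π} : ℤ) ^ r
            * 2 ^ (n - j) * stirling1 n j := by
  rw [TypeB.ncard_minIntFam, TypeB.card_minIntTuples_pmSet hn (by omega)]
  simp_rw [TypeB.ncard_isBnPartition_and_noZeroBlock]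
end

section
/- For every integer n ≥ 1, the number |Π_n^B| of B_n-partitions (the Dowling number) is given by the convergent series |Π_n^B| = (1/√e) · Σ_{k≥0} (2k+1)^n / (2k)!!. -/
open scoped BigOperators

/-!
Sort the `(2k+1)ⁿ` maps `f : [n] → [-k, k]` by the `Bₙ`-partition into the level sets of the
odd extension `x ↦ sign x · f |x|` of `f` to `[±n]`. A `Bₙ`-partition with `b` block pairs arises
from exactly `2ᵇ (k)_b` maps: the zero-block takes the value `0`, and the pairs receive distinct
nonzero values, each up to a sign. Hence `(2k+1)ⁿ = Σ_π 2ᵇ (k)_b`; dividing by `(2k)!! = 2ᵏ k!`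
and summing over `k`, every `π` contributes `Σ_k 2ᵇ (k)_b / (2ᵏ k!) = e^{1/2}`.
-/

open Finset

lemma mem_pmSet {n : ℕ} {x : ℤ} : x ∈ pmSet n ↔ x ≠ 0 ∧ -(n : ℤ) ≤ x ∧ x ≤ n := by
  simp [pmSet]

lemma neg_mem_pmSet {n : ℕ} {x : ℤ} (h : x ∈ pmSet n) : -x ∈ pmSet n := by
  rw [mem_pmSet] at *; omega

lemma natCast_add_one_mem_pmSet {n : ℕ} (i : Fin n) : (i : ℤ) + 1 ∈ pmSet n := by
  rw [mem_pmSet]; omega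

@[simp] lemma mem_negBlock {B : Finset ℤ} {x : ℤ} : x ∈ negBlock B ↔ -x ∈ B := by
  simp [negBlock, neg_eq_iff_eq_neg]

@[simp] lemma negBlock_negBlock (B : Finset ℤ) : negBlock (negBlock B) = B := by
  ext; simp

namespace IsBnPartition

variable {n : ℕ} {π : Finset (Finset ℤ)} {B C : Finset ℤ}

lemma nonempty (hπ : IsBnPartition n π) (hB : B ∈ π) : B.Nonempty :=
  nonempty_iff_ne_empty.2 (hπ.1 B hB)

lemma subset_pmSet (hπ : IsBnPartition n π) (hB : B ∈ π) : B ⊆ pmSet n :=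
  hπ.2.1 B hB

lemma negBlock_mem (hπ : IsBnPartition n π) (hB : B ∈ π) : negBlock B ∈ π :=
  hπ.2.2.2.1 B hB

lemma exists_mem (hπ : IsBnPartition n π) {x : ℤ} (hx : x ∈ pmSet n) : ∃ B ∈ π, x ∈ B :=
  let ⟨B, hB, _⟩ := hπ.2.2.1 x hx
  ⟨B, hB⟩

lemma eq_of_mem_of_mem (hπ : IsBnPartition n π) (hB : B ∈ π) (hC : C ∈ π) {x : ℤ}
    (hxB : x ∈ B) (hxC : x ∈ C) : B = C :=
  (hπ.2.2.1 x (hπ.subset_pmSet hB hxB)).unique ⟨hB, hxB⟩ ⟨hC, hxC⟩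

lemma eq_of_negBlock_eq (hπ : IsBnPartition n π) (hB : B ∈ π) (hC : C ∈ π)
    (hB' : negBlock B = B) (hC' : negBlock C = C) : B = C :=
  card_le_one.1 hπ.2.2.2.2 B (mem_filter.2 ⟨hB, hB'⟩) C (mem_filter.2 ⟨hC, hC'⟩)

end IsBnPartition

def absMax (B : Finset ℤ) : ℕ := B.sup Int.natAbs

lemma absMax_mem_or_neg_mem {B : Finset ℤ} (h : B.Nonempty) :
    (absMax B : ℤ) ∈ B ∨ -(absMax B : ℤ) ∈ B := by
  obtain ⟨x, hx, hmax⟩ := exists_mem_eq_sup B h Int.natAbs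
  rw [absMax, hmax]
  rcases Int.natAbs_eq x with h | h
  · exact Or.inl (h ▸ hx)
  · exact Or.inr (by rw [← h]; simpa using hx)

@[simp] lemma absMax_negBlock (B : Finset ℤ) : absMax (negBlock B) = absMax B := by
  simp [absMax, negBlock, sup_image, Function.comp_def]

/-- Of each pair `{B, -B}` of distinct blocks, the one containing `absMax B = absMax (-B)`. -/
def pairReps (π : Finset (Finset ℤ)) : Finset (Finset ℤ) :=
  π.filter fun B => negBlock B ≠ B ∧ (absMax B : ℤ) ∈ B

section pairReps

variable {n : ℕ} {π : Finset (Finset ℤ)} {B : Finset ℤ}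

lemma mem_pairReps : B ∈ pairReps π ↔ B ∈ π ∧ negBlock B ≠ B ∧ (absMax B : ℤ) ∈ B :=
  mem_filter

lemma negBlock_notMem_pairReps (hπ : IsBnPartition n π) (hB : B ∈ pairReps π) :
    negBlock B ∉ pairReps π := by
  rw [mem_pairReps] at hB ⊢
  rintro ⟨hB', -, hmax⟩
  rw [absMax_negBlock] at hmax
  exact hB.2.1 (hπ.eq_of_mem_of_mem hB' hB.1 hmax hB.2.2)

lemma mem_pairReps_or_negBlock_mem (hπ : IsBnPartition n π) (hB : B ∈ π)
    (hne : negBlock B ≠ B) : B ∈ pairReps π ∨ negBlock B ∈ pairReps π := by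
  rcases absMax_mem_or_neg_mem (hπ.nonempty hB) with h | h
  · exact Or.inl (mem_pairReps.2 ⟨hB, hne, h⟩)
  · refine Or.inr (mem_pairReps.2 ⟨hπ.negBlock_mem hB, ?_, by simpa using h⟩)
    rw [negBlock_negBlock]; exact hne.symm

lemma negBlock_eq_of_notMem_pairReps (hπ : IsBnPartition n π) (hB : B ∈ π)
    (h₁ : B ∉ pairReps π) (h₂ : negBlock B ∉ pairReps π) : negBlock B = B := by
  by_contra hne
  exact (mem_pairReps_or_negBlock_mem hπ hB hne).elim h₁ h₂

end pairReps

section levelPartition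

variable {n : ℕ}

/-- `Fin n` stands for `{1, …, n}` via `i ↦ i + 1`. -/
def oddExt (f : Fin n → ℤ) (x : ℤ) : ℤ :=
  x.sign * if h : x.natAbs - 1 < n then f ⟨x.natAbs - 1, h⟩ else 0

lemma oddExt_neg (f : Fin n → ℤ) (x : ℤ) : oddExt f (-x) = -oddExt f x := by
  simp only [oddExt, Int.natAbs_neg, Int.sign_neg]
  split_ifs <;> ring

lemma oddExt_natCast_add_one (f : Fin n → ℤ) (i : Fin n) : oddExt f ((i : ℤ) + 1) = f i := by
  have hsign : ((i : ℤ) + 1).sign = 1 := Int.sign_eq_one_of_pos (by omega)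
  have habs : ((i : ℤ) + 1).natAbs - 1 = i := by omega
  simp [oddExt, hsign, habs]

lemma oddExt_mem_Icc {k : ℕ} {f : Fin n → ℤ} (hf : ∀ i, f i ∈ Icc (-(k : ℤ)) k) (x : ℤ) :
    oddExt f x ∈ Icc (-(k : ℤ)) k := by
  unfold oddExt
  split_ifs with h
  · have := mem_Icc.1 (hf ⟨_, h⟩)
    rcases Int.sign_trichotomy x with hs | hs | hs <;> rw [hs, mem_Icc] <;> omega
  · simp

noncomputable def fiberBlock (f : Fin n → ℤ) (x : ℤ) : Finset ℤ :=
  (pmSet n).filter fun y => oddExt f y = oddExt f x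

noncomputable def levelPartition (n : ℕ) (f : Fin n → ℤ) : Finset (Finset ℤ) :=
  (pmSet n).image (fiberBlock f)

variable {f : Fin n → ℤ} {x y : ℤ} {B : Finset ℤ}

lemma mem_fiberBlock : y ∈ fiberBlock f x ↔ y ∈ pmSet n ∧ oddExt f y = oddExt f x :=
  mem_filter

lemma fiberBlock_eq_fiberBlock_iff (hx : x ∈ pmSet n) :
    fiberBlock f x = fiberBlock f y ↔ oddExt f x = oddExt f y := by
  refine ⟨fun h => (mem_fiberBlock.1 (h ▸ mem_fiberBlock.2 ⟨hx, rfl⟩)).2, fun h => ?_⟩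
  simp only [fiberBlock, h]

lemma negBlock_fiberBlock (f : Fin n → ℤ) (x : ℤ) :
    negBlock (fiberBlock f x) = fiberBlock f (-x) := by
  ext y
  simp only [mem_negBlock, mem_fiberBlock, oddExt_neg, neg_eq_iff_eq_neg]
  exact and_congr_left' ⟨fun h => by simpa using neg_mem_pmSet h, neg_mem_pmSet⟩

lemma mem_levelPartition : B ∈ levelPartition n f ↔ ∃ x ∈ pmSet n, fiberBlock f x = B :=
  mem_image

lemma fiberBlock_eq_of_mem (hB : B ∈ levelPartition n f) (hx : x ∈ B) : fiberBlock f x = B := by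
  obtain ⟨z, hz, rfl⟩ := mem_levelPartition.1 hB
  exact (fiberBlock_eq_fiberBlock_iff (mem_fiberBlock.1 hx).1).2 (mem_fiberBlock.1 hx).2

lemma oddExt_eq_of_mem (hB : B ∈ levelPartition n f) (hx : x ∈ B) (hy : y ∈ B) :
    oddExt f x = oddExt f y := by
  obtain ⟨z, hz, rfl⟩ := mem_levelPartition.1 hB
  rw [(mem_fiberBlock.1 hx).2, (mem_fiberBlock.1 hy).2]

lemma eq_zeroLevel_of_negBlock_eq (hB : B ∈ levelPartition n f) (hself : negBlock B = B) :
    B = (pmSet n).filter fun y => oddExt f y = 0 := by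
  obtain ⟨x, hx, rfl⟩ := mem_levelPartition.1 hB
  have hx' : x ∈ fiberBlock f (-x) :=
    negBlock_fiberBlock f x ▸ hself.symm ▸ mem_fiberBlock.2 ⟨hx, rfl⟩
  have h0 : oddExt f x = 0 := by
    have := (mem_fiberBlock.1 hx').2
    rw [oddExt_neg] at this
    omega
  simp only [fiberBlock, h0]

lemma isBnPartition_levelPartition (f : Fin n → ℤ) : IsBnPartition n (levelPartition n f) := by
  refine ⟨?_, ?_, fun x hx => ?_, ?_, ?_⟩
  · rintro B hB
    obtain ⟨x, hx, rfl⟩ := mem_levelPartition.1 hB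
    exact ne_empty_of_mem (mem_fiberBlock.2 ⟨hx, rfl⟩)
  · rintro B hB
    obtain ⟨x, -, rfl⟩ := mem_levelPartition.1 hB
    exact filter_subset _ _
  · exact ⟨fiberBlock f x, ⟨mem_levelPartition.2 ⟨x, hx, rfl⟩, mem_fiberBlock.2 ⟨hx, rfl⟩⟩,
      fun C hC => (fiberBlock_eq_of_mem hC.1 hC.2).symm⟩
  · rintro B hB
    obtain ⟨x, hx, rfl⟩ := mem_levelPartition.1 hB
    rw [negBlock_fiberBlock]
    exact mem_levelPartition.2 ⟨-x, neg_mem_pmSet hx, rfl⟩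
  · refine card_le_one.2 fun B hB C hC => ?_
    rw [mem_filter] at hB hC
    rw [eq_zeroLevel_of_negBlock_eq hB.1 hB.2, eq_zeroLevel_of_negBlock_eq hC.1 hC.2]

end levelPartition

section signedInjections

variable {γ : Type*} [Fintype γ] {k : ℕ}

open Classical in
noncomputable def signedInjections (γ : Type*) [Fintype γ] (k : ℕ) : Finset (γ → ℤ) :=
  (Fintype.piFinset fun _ => (Icc (-(k : ℤ)) k).erase 0).filter
    fun d => Function.Injective fun a => |d a|

lemma mem_signedInjections {d : γ → ℤ} :
    d ∈ signedInjections γ k ↔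
      (∀ a, d a ≠ 0 ∧ -(k : ℤ) ≤ d a ∧ d a ≤ k) ∧ Function.Injective fun a => |d a| := by
  simp only [signedInjections, mem_filter, Fintype.mem_piFinset, mem_erase, mem_Icc]

/-- Such a map is a sign for each `a` together with an injection `a ↦ |d a| - 1` into `Fin k`. -/
lemma card_signedInjections :
    (signedInjections γ k).card = 2 ^ Fintype.card γ * k.descFactorial (Fintype.card γ) := by
  classical
  have hcard : (signedInjections γ k).card = Fintype.card ((γ → Bool) × (γ ↪ Fin k)) := by
    rw [← card_univ]
    refine card_bij'
      (fun d hd => (fun a => decide (0 < d a),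
        ⟨fun a => ⟨(d a).natAbs - 1, by
          have := (mem_signedInjections.1 hd).1 a
          omega⟩, fun a b hab => by
          have hd := mem_signedInjections.1 hd
          have ha := hd.1 a
          have hb := hd.1 b
          have : (d a).natAbs - 1 = (d b).natAbs - 1 := congrArg Fin.val hab
          exact hd.2 (by simp only [Int.abs_eq_natAbs]; omega)⟩))
      (fun p _ a => (if p.1 a then 1 else -1) * ((p.2 a : ℕ) + 1 : ℤ))
      (fun _ _ => mem_univ _) (fun p _ => ?_) (fun d hd => ?_) (fun p _ => ?_)
    · have habs : ∀ c, |(if p.1 c then (1 : ℤ) else -1) * ((p.2 c : ℕ) + 1 : ℤ)|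
          = ((p.2 c : ℕ) : ℤ) + 1 := fun c => by
        split_ifs
        · rw [one_mul, abs_of_nonneg (by positivity)]
        · rw [neg_one_mul, abs_neg, abs_of_nonneg (by positivity)]
      refine mem_signedInjections.2 ⟨fun a => ?_, fun a b hab => p.2.injective (Fin.ext ?_)⟩
      · have := (p.2 a).isLt
        split_ifs <;> omega
      · simp only [habs] at hab
        omega
    · funext a
      have := (mem_signedInjections.1 hd).1 a
      show (if decide (0 < d a) then 1 else -1) * ((((d a).natAbs - 1 : ℕ) : ℤ) + 1) = d a
      by_cases hpos : 0 < d a <;> simp [hpos] <;> omega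
    · ext a
      · cases hb : p.1 a <;> simp [hb]
      · show ((if p.1 a then 1 else -1) * ((p.2 a : ℕ) + 1 : ℤ)).natAbs - 1 = (p.2 a : ℕ)
        split_ifs <;> omega
  rw [hcard, Fintype.card_prod, Fintype.card_fun, Fintype.card_embedding_eq,
    Fintype.card_bool, Fintype.card_fin]

end signedInjections

section blockValue

variable {n k : ℕ} {π : Finset (Finset ℤ)} {d : {B // B ∈ pairReps π} → ℤ} {B : Finset ℤ} {x : ℤ}

def blockValue (π : Finset (Finset ℤ)) (d : {B // B ∈ pairReps π} → ℤ) (B : Finset ℤ) : ℤ :=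
  if h : B ∈ pairReps π then d ⟨B, h⟩
  else if h' : negBlock B ∈ pairReps π then -d ⟨negBlock B, h'⟩ else 0

/-- The value of the block containing `x`, written without choosing that block. -/
def pointValue (π : Finset (Finset ℤ)) (d : {B // B ∈ pairReps π} → ℤ) (x : ℤ) : ℤ :=
  ∑ B ∈ π, if x ∈ B then blockValue π d B else 0

def funOfBlockValues (n : ℕ) (π : Finset (Finset ℤ)) (d : {B // B ∈ pairReps π} → ℤ) :
    Fin n → ℤ :=
  fun i => pointValue π d ((i : ℤ) + 1)

lemma blockValue_of_mem_pairReps (hB : B ∈ pairReps π) : blockValue π d B = d ⟨B, hB⟩ :=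
  dif_pos hB

lemma blockValue_of_negBlock_eq (hself : negBlock B = B) : blockValue π d B = 0 := by
  have h : B ∉ pairReps π := fun h => (mem_pairReps.1 h).2.1 hself
  rw [blockValue, dif_neg h, dif_neg (by rwa [hself])]

lemma blockValue_negBlock (hπ : IsBnPartition n π) (hB : B ∈ π) :
    blockValue π d (negBlock B) = -blockValue π d B := by
  by_cases hT : B ∈ pairReps π
  · have hT' : negBlock (negBlock B) ∈ pairReps π := by rwa [negBlock_negBlock]
    simp only [blockValue, dif_neg (negBlock_notMem_pairReps hπ hT), dif_pos hT', dif_pos hT]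
    congr 2
    exact Subtype.ext (negBlock_negBlock B)
  · by_cases hT' : negBlock B ∈ pairReps π
    · rw [blockValue, dif_pos hT', blockValue, dif_neg hT, dif_pos hT', neg_neg]
    · have hself := negBlock_eq_of_notMem_pairReps hπ hB hT hT'
      rw [hself, blockValue_of_negBlock_eq hself, neg_zero]

lemma exists_pairRep (hπ : IsBnPartition n π) (hB : B ∈ π) (hne : negBlock B ≠ B) :
    ∃ E ∈ pairReps π, B = E ∨ B = negBlock E := by
  rcases mem_pairReps_or_negBlock_mem hπ hB hne with h | h
  · exact ⟨B, h, Or.inl rfl⟩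
  · exact ⟨negBlock B, h, Or.inr (negBlock_negBlock B).symm⟩

lemma pointValue_eq (hπ : IsBnPartition n π) (hB : B ∈ π) (hx : x ∈ B) :
    pointValue π d x = blockValue π d B := by
  rw [pointValue, sum_eq_single_of_mem B hB, if_pos hx]
  intro C hC hne
  rw [if_neg fun hxC => hne (hπ.eq_of_mem_of_mem hC hB hxC hx)]

lemma pointValue_neg (hπ : IsBnPartition n π) (hx : x ∈ pmSet n) :
    pointValue π d (-x) = -pointValue π d x := by
  obtain ⟨B, hB, hxB⟩ := hπ.exists_mem hx
  rw [pointValue_eq hπ (hπ.negBlock_mem hB) (by simpa using hxB), pointValue_eq hπ hB hxB,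
    blockValue_negBlock hπ hB]

lemma oddExt_funOfBlockValues (hπ : IsBnPartition n π) (hx : x ∈ pmSet n) :
    oddExt (funOfBlockValues n π d) x = pointValue π d x := by
  have hx' := mem_pmSet.1 hx
  have hlt : x.natAbs - 1 < n := by omega
  have hcast : ((x.natAbs - 1 : ℕ) : ℤ) + 1 = |x| := by rw [← Int.natCast_natAbs]; omega
  simp only [oddExt, funOfBlockValues, dif_pos hlt, hcast]
  rcases lt_or_gt_of_ne hx'.1 with h | h
  · rw [Int.sign_eq_neg_one_of_neg h, abs_of_neg h, pointValue_neg hπ hx]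
    ring
  · rw [Int.sign_eq_one_of_pos h, abs_of_pos h, one_mul]

lemma blockValue_mem_Icc (hd : d ∈ signedInjections {B // B ∈ pairReps π} k) :
    blockValue π d B ∈ Icc (-(k : ℤ)) k := by
  have h := (mem_signedInjections.1 hd).1
  rw [mem_Icc]
  unfold blockValue
  split_ifs with h₁ h₂
  · exact (h _).2
  · have := (h ⟨_, h₂⟩).2; omega
  · omega

lemma blockValue_eq_zero_iff (hπ : IsBnPartition n π)
    (hd : d ∈ signedInjections {B // B ∈ pairReps π} k) (hB : B ∈ π) :
    blockValue π d B = 0 ↔ negBlock B = B := by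
  refine ⟨fun h0 => ?_, blockValue_of_negBlock_eq⟩
  have h := (mem_signedInjections.1 hd).1
  unfold blockValue at h0
  split_ifs at h0 with h₁ h₂
  · exact absurd h0 (h _).1
  · exact absurd (neg_eq_zero.1 h0) (h _).1
  · exact negBlock_eq_of_notMem_pairReps hπ hB h₁ h₂

lemma blockValue_injOn (hπ : IsBnPartition n π)
    (hd : d ∈ signedInjections {B // B ∈ pairReps π} k) :
    Set.InjOn (blockValue π d) π := by
  intro B hB C hC he
  by_cases hz : blockValue π d B = 0
  · exact hπ.eq_of_negBlock_eq hB hC ((blockValue_eq_zero_iff hπ hd hB).1 hz)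
      ((blockValue_eq_zero_iff hπ hd hC).1 (he ▸ hz))
  have hne : ∀ {A}, A ∈ π → blockValue π d A ≠ 0 → negBlock A ≠ A :=
    fun hA hA0 h => hA0 ((blockValue_eq_zero_iff hπ hd hA).2 h)
  obtain ⟨E, hE, hBE⟩ := exists_pairRep hπ hB (hne hB hz)
  obtain ⟨F, hF, hCF⟩ := exists_pairRep hπ hC (hne hC (he ▸ hz))
  have habs : ∀ {A E} (hE : E ∈ pairReps π), A = E ∨ A = negBlock E →
      |blockValue π d A| = |d ⟨E, hE⟩| := by
    rintro A E hE (rfl | rfl)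
    · rw [blockValue_of_mem_pairReps hE]
    · rw [blockValue_negBlock hπ (mem_pairReps.1 hE).1, blockValue_of_mem_pairReps hE, abs_neg]
  have hEF : E = F := congrArg Subtype.val <| (mem_signedInjections.1 hd).2
    (show |d ⟨E, hE⟩| = |d ⟨F, hF⟩| by rw [← habs hE hBE, ← habs hF hCF, he])
  subst hEF
  -- `B` and `C` are `E` or `-E`; the mixed cases would force the value `0`.
  rcases hBE with rfl | rfl <;> rcases hCF with rfl | rfl
  · rfl
  · rw [blockValue_negBlock hπ hB] at he; omega
  · rw [blockValue_negBlock hπ hC] at he hz; omega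
  · rfl

lemma fiberBlock_funOfBlockValues (hπ : IsBnPartition n π)
    (hd : d ∈ signedInjections {B // B ∈ pairReps π} k) (hB : B ∈ π) (hx : x ∈ B) :
    fiberBlock (funOfBlockValues n π d) x = B := by
  have hx' := hπ.subset_pmSet hB hx
  ext y
  rw [mem_fiberBlock]
  constructor
  · rintro ⟨hy, hxy⟩
    obtain ⟨C, hC, hyC⟩ := hπ.exists_mem hy
    rw [oddExt_funOfBlockValues hπ hy, oddExt_funOfBlockValues hπ hx', pointValue_eq hπ hC hyC,
      pointValue_eq hπ hB hx] at hxy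
    rwa [← blockValue_injOn hπ hd hC hB hxy]
  · intro hy
    refine ⟨hπ.subset_pmSet hB hy, ?_⟩
    rw [oddExt_funOfBlockValues hπ (hπ.subset_pmSet hB hy), oddExt_funOfBlockValues hπ hx',
      pointValue_eq hπ hB hy, pointValue_eq hπ hB hx]

lemma levelPartition_funOfBlockValues (hπ : IsBnPartition n π)
    (hd : d ∈ signedInjections {B // B ∈ pairReps π} k) :
    levelPartition n (funOfBlockValues n π d) = π := by
  ext B
  rw [mem_levelPartition]
  constructor
  · rintro ⟨x, hx, rfl⟩
    obtain ⟨C, hC, hxC⟩ := hπ.exists_mem hx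
    rwa [fiberBlock_funOfBlockValues hπ hd hC hxC]
  · intro hB
    obtain ⟨x, hx⟩ := hπ.nonempty hB
    exact ⟨x, hπ.subset_pmSet hB hx, fiberBlock_funOfBlockValues hπ hd hB hx⟩

lemma funOfBlockValues_mem_Icc (hπ : IsBnPartition n π)
    (hd : d ∈ signedInjections {B // B ∈ pairReps π} k) (i : Fin n) :
    funOfBlockValues n π d i ∈ Icc (-(k : ℤ)) k := by
  obtain ⟨B, hB, hxB⟩ := hπ.exists_mem (natCast_add_one_mem_pmSet i)
  rw [funOfBlockValues, pointValue_eq hπ hB hxB]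
  exact blockValue_mem_Icc hd

end blockValue

section fiber

variable {n k : ℕ} {f : Fin n → ℤ} {B : Finset ℤ}

def repValues (π : Finset (Finset ℤ)) (f : Fin n → ℤ) : {B // B ∈ pairReps π} → ℤ :=
  fun B => oddExt f (absMax B.1)

lemma blockValue_repValues (hB : B ∈ levelPartition n f) {x : ℤ} (hx : x ∈ B) :
    blockValue (levelPartition n f) (repValues _ f) B = oddExt f x := by
  have hπ := isBnPartition_levelPartition f
  have hneg : -x ∈ negBlock B := by simpa using hx
  unfold blockValue
  split_ifs with hT hT'
  · exact oddExt_eq_of_mem hB (mem_pairReps.1 hT).2.2 hx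
  · have h := oddExt_eq_of_mem (hπ.negBlock_mem hB) (mem_pairReps.1 hT').2.2 hneg
    rw [repValues, h, oddExt_neg, neg_neg]
  · have hself := negBlock_eq_of_notMem_pairReps hπ hB hT hT'
    have h := oddExt_eq_of_mem hB (hself ▸ hneg) hx
    rw [oddExt_neg] at h
    omega

lemma repValues_mem_signedInjections (hf : ∀ i, f i ∈ Icc (-(k : ℤ)) k) :
    repValues _ f ∈ signedInjections {B // B ∈ pairReps (levelPartition n f)} k := by
  have hπ := isBnPartition_levelPartition f
  have hrep : ∀ B : {B // B ∈ pairReps (levelPartition n f)},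
      fiberBlock f (absMax B.1) = B.1 ∧ (absMax B.1 : ℤ) ∈ pmSet n := fun ⟨B, hB⟩ => by
    obtain ⟨hBπ, -, hmax⟩ := mem_pairReps.1 hB
    exact ⟨fiberBlock_eq_of_mem hBπ hmax, hπ.subset_pmSet hBπ hmax⟩
  refine mem_signedInjections.2 ⟨fun B => ⟨fun h0 => ?_, mem_Icc.1 (oddExt_mem_Icc hf _)⟩,
    fun B C hBC => ?_⟩
  · -- a block whose value is `0` is its own negative
    have h0' : oddExt f (absMax B.1) = 0 := h0
    apply (mem_pairReps.1 B.2).2.1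
    rw [← (hrep B).1, negBlock_fiberBlock, fiberBlock_eq_fiberBlock_iff
      (neg_mem_pmSet (hrep B).2), oddExt_neg, h0', neg_zero]
  · rcases abs_eq_abs.1 hBC with h | h
    · exact Subtype.ext ((hrep B).1.symm.trans
        (((fiberBlock_eq_fiberBlock_iff (hrep B).2).2 h).trans (hrep C).1))
    · exfalso
      have hBC' : B.1 = negBlock C.1 := by
        rw [← (hrep B).1, ← (hrep C).1, negBlock_fiberBlock,
          fiberBlock_eq_fiberBlock_iff (hrep B).2, oddExt_neg]
        exact h
      have hB := mem_pairReps.1 B.2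
      have hC := mem_pairReps.1 C.2
      rw [hBC', absMax_negBlock] at hB
      exact hC.2.1 (hπ.eq_of_mem_of_mem hC.1 hB.1 hC.2.2 hB.2.2).symm

lemma card_fiber_levelPartition (k : ℕ) {π : Finset (Finset ℤ)} (hπ : IsBnPartition n π) :
    ((Fintype.piFinset fun _ : Fin n => Icc (-(k : ℤ)) k).filter
      fun f => levelPartition n f = π).card =
      2 ^ (pairReps π).card * k.descFactorial (pairReps π).card := by
  rw [← Fintype.card_coe (pairReps π), ← card_signedInjections]
  refine card_bij' (fun f _ => repValues π f) (fun d _ => funOfBlockValues n π d) ?_ ?_ ?_ ?_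
  · intro f hf
    obtain ⟨hfk, rfl⟩ := mem_filter.1 hf
    exact repValues_mem_signedInjections (Fintype.mem_piFinset.1 hfk)
  · intro d hd
    exact mem_filter.2 ⟨Fintype.mem_piFinset.2 (funOfBlockValues_mem_Icc hπ hd),
      levelPartition_funOfBlockValues hπ hd⟩
  · intro f hf
    obtain ⟨-, rfl⟩ := mem_filter.1 hf
    funext i
    obtain ⟨B, hB, hxB⟩ := hπ.exists_mem (natCast_add_one_mem_pmSet i)
    rw [funOfBlockValues, pointValue_eq hπ hB hxB, blockValue_repValues hB hxB,
      oddExt_natCast_add_one]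
  · intro d _
    funext B
    obtain ⟨hBπ, -, hmax⟩ := mem_pairReps.1 B.2
    rw [repValues, oddExt_funOfBlockValues hπ (hπ.subset_pmSet hBπ hmax),
      pointValue_eq hπ hBπ hmax, blockValue_of_mem_pairReps B.2]

end fiber

open Classical in
noncomputable def bnPartitions (n : ℕ) : Finset (Finset (Finset ℤ)) :=
  (pmSet n).powerset.powerset.filter (IsBnPartition n)

lemma mem_bnPartitions {n : ℕ} {π : Finset (Finset ℤ)} :
    π ∈ bnPartitions n ↔ IsBnPartition n π := by
  simp only [bnPartitions, mem_filter, mem_powerset, and_iff_right_iff_imp]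
  exact fun hπ B hB => mem_powerset.2 (hπ.subset_pmSet hB)

theorem two_mul_add_one_pow_eq_sum (n k : ℕ) :
    (2 * k + 1) ^ n =
      ∑ π ∈ bnPartitions n, 2 ^ (pairReps π).card * k.descFactorial (pairReps π).card := by
  have hcard : (Fintype.piFinset fun _ : Fin n => Icc (-(k : ℤ)) k).card = (2 * k + 1) ^ n := by
    simp only [Fintype.card_piFinset, Int.card_Icc, prod_const, card_univ, Fintype.card_fin]
    congr 1
    omega
  rw [← hcard, card_eq_sum_card_fiberwise (f := levelPartition n) (t := bnPartitions n)]
  · exact sum_congr rfl fun π hπ => card_fiber_levelPartition k (mem_bnPartitions.1 hπ)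
  · exact fun f _ => mem_bnPartitions.2 (isBnPartition_levelPartition f)

lemma hasSum_descFactorial_mul_pow_div_factorial (x : ℝ) (j : ℕ) :
    HasSum (fun k : ℕ => (k.descFactorial j : ℝ) * x ^ k / k.factorial)
      (x ^ j * Real.exp x) := by
  have hshift : ∀ m : ℕ, ((m + j).descFactorial j : ℝ) * x ^ (m + j) / (m + j).factorial
      = x ^ j * (x ^ m / m.factorial) := by
    intro m
    have h := Nat.factorial_mul_descFactorial (Nat.le_add_left j m)
    rw [Nat.add_sub_cancel] at h
    rw [← h]
    push_cast
    field_simp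
    ring
  refine (hasSum_nat_add_iff' j).1 ?_
  rw [sum_eq_zero fun i hi => by simp [Nat.descFactorial_eq_zero_iff_lt.2 (mem_range.1 hi)],
    sub_zero, funext hshift, Real.exp_eq_exp_ℝ]
  exact (NormedSpace.expSeries_div_hasSum_exp x).mul_left _

lemma hasSum_two_pow_mul_descFactorial_div (j : ℕ) :
    HasSum (fun k : ℕ => (2 ^ j * k.descFactorial j : ℝ) / (2 ^ k * k.factorial))
      (Real.exp (1 / 2)) := by
  have h := (hasSum_descFactorial_mul_pow_div_factorial (1 / 2) j).mul_left (2 ^ j)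
  rw [← mul_assoc, ← mul_pow, mul_one_div_cancel two_ne_zero, one_pow, one_mul] at h
  have e : (fun k : ℕ => (2 ^ j * k.descFactorial j : ℝ) / (2 ^ k * k.factorial)) =
      fun k => 2 ^ j * ((k.descFactorial j : ℝ) * (1 / 2) ^ k / k.factorial) := by
    funext k
    rw [div_pow, one_pow]
    field_simp
  rw [e]
  exact h

lemma sqrt_exp_one : √(Real.exp 1) = Real.exp (1 / 2) := by
  rw [← Real.exp_half, one_div]

theorem stmt16_general (n : ℕ) :
    Summable (fun k : ℕ => ((2 * k + 1 : ℕ) : ℝ) ^ n / ((2 : ℝ) ^ k * k.factorial)) ∧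
    (Set.ncard {π : Finset (Finset ℤ) | IsBnPartition n π} : ℝ)
      = (1 / Real.sqrt (Real.exp 1))
        * ∑' k : ℕ, ((2 * k + 1 : ℕ) : ℝ) ^ n / ((2 : ℝ) ^ k * k.factorial) := by
  have hterm : ∀ k : ℕ, ((2 * k + 1 : ℕ) : ℝ) ^ n / (2 ^ k * k.factorial) =
      ∑ π ∈ bnPartitions n, (2 ^ (pairReps π).card * k.descFactorial (pairReps π).card : ℝ) /
        (2 ^ k * k.factorial) := by
    intro k
    rw [← sum_div, ← Nat.cast_pow, two_mul_add_one_pow_eq_sum]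
    push_cast
    rfl
  have hsum : HasSum (fun k : ℕ => ((2 * k + 1 : ℕ) : ℝ) ^ n / (2 ^ k * k.factorial))
      ((bnPartitions n).card * Real.exp (1 / 2)) := by
    simpa only [hterm, sum_const, nsmul_eq_mul] using
      hasSum_sum fun π _ => hasSum_two_pow_mul_descFactorial_div (pairReps π).card
  have hcard : {π : Finset (Finset ℤ) | IsBnPartition n π} = bnPartitions n := by
    ext π; exact mem_bnPartitions.symm
  refine ⟨hsum.summable, ?_⟩
  rw [hsum.tsum_eq, hcard, Set.ncard_coe_finset, sqrt_exp_one]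
  field_simp

/-- Benoumhani's formula for the Dowling number: the number of `Bₙ`-partitions is
`|Πₙᴮ| = (1/√e) Σ_{k≥0} (2k+1)ⁿ/(2k)!!`. -/
theorem stmt16 (n : ℕ) (hn : 1 ≤ n) :
    Summable (fun k : ℕ => ((2 * k + 1 : ℕ) : ℝ) ^ n / ((2 : ℝ) ^ k * k.factorial)) ∧
    (Set.ncard {π : Finset (Finset ℤ) | IsBnPartition n π} : ℝ)
      = (1 / Real.sqrt (Real.exp 1))
        * ∑' k : ℕ, ((2 * k + 1 : ℕ) : ℝ) ^ n / ((2 : ℝ) ^ k * k.factorial) :=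
  stmt16_general n
end
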